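/- arXiv:2305.13476 — 10 statements merged into one kernel-verified Lean document; each statement's English description precedes it below -/
import Mathlib

section
/- Let N ≥ 1 and let J^i : ℝ^{m_1} × ⋯ × ℝ^{m_N} → ℝ (i = 1,…,N) be twice continuously differentiable loss functions. Then the game (J^1,…,J^N) admits an exact potential function Π if and only if for all players i, j, every point γ ∈ ℝ^{m_1} × ⋯ × ℝ^{m_N}, and all directions v ∈ ℝ^{m_i}, w ∈ ℝ^{m_j} (viewed as vectors of the product space supported on the coordinates of players i and j respectively), the second derivatives satisfy D²J^i(γ)(v, w) = D²J^j(γ)(v, w). -/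
/-!
STATEMENT 0: For an `N`-player game with twice continuously differentiable losses
`J i : (∏ j, ℝ^{m j}) → ℝ`, the game admits an exact potential function if and only if
for all players `i, j`, every point `γ`, and all directions `v` (supported on player `i`'s
coordinates) and `w` (supported on player `j`'s coordinates),
`D²J^i(γ)(v, w) = D²J^j(γ)(v, w)`.
-/


section Aux

variable {X : Type*} [NormedAddCommGroup X] [NormedSpace ℝ X]

lemma aux_hasDerivAt_line {f : X → ℝ} (hf : Differentiable ℝ f) (a v : X) (s : ℝ) :
    HasDerivAt (fun t : ℝ => f (a + t • v)) (fderiv ℝ f (a + s • v) v) s := by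
  have hline : HasDerivAt (fun t : ℝ => a + t • v) v s := by
    simpa using ((hasDerivAt_id s).smul_const v).const_add a
  exact ((hf (a + s • v)).hasFDerivAt.comp_hasDerivAt s hline)

lemma aux_fderiv_apply_const {F : X → ℝ} (hF : ContDiff ℝ 2 F) (u : X) (x d : X) :
    fderiv ℝ (fun y => fderiv ℝ F y u) x d = fderiv ℝ (fderiv ℝ F) x d u := by
  have hd : DifferentiableAt ℝ (fderiv ℝ F) x :=
    ((hF.fderiv_right (m := 1) (by norm_num)).differentiable one_ne_zero) x
  rw [fderiv_clm_apply hd (differentiableAt_const u)]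
  simp

lemma aux_diff_fderiv_apply {F : X → ℝ} (hF : ContDiff ℝ 2 F) (u : X) :
    Differentiable ℝ (fun y => fderiv ℝ F y u) := fun x =>
  (((hF.fderiv_right (m := 1) (by norm_num)).differentiable one_ne_zero) x).clm_apply
    (differentiableAt_const u)

lemma aux_key_zero {F : X → ℝ} (hF : ContDiff ℝ 2 F) (γ v w : X)
    (h2 : ∀ x, fderiv ℝ (fderiv ℝ F) x w v = 0) :
    F (γ + v + w) - F (γ + w) - F (γ + v) + F γ = 0 := by
  have hFd : Differentiable ℝ F := hF.differentiable (by norm_num)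
  -- inner step: for all s, fderiv F (γ + s•v + w) v = fderiv F (γ + s•v) v
  have hinner : ∀ s : ℝ, fderiv ℝ F (γ + s • v + w) v = fderiv ℝ F (γ + s • v) v := by
    intro s
    have hconst : ∀ t : ℝ, deriv (fun t : ℝ => fderiv ℝ F ((γ + s • v) + t • w) v) t = 0 := by
      intro t
      have h := aux_hasDerivAt_line (f := fun y => fderiv ℝ F y v)
        (aux_diff_fderiv_apply hF v) (γ + s • v) w t
      rw [h.deriv, aux_fderiv_apply_const hF v, h2]
    have hdiff : Differentiable ℝ (fun t : ℝ => fderiv ℝ F ((γ + s • v) + t • w) v) := by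
      intro t
      exact (aux_hasDerivAt_line (f := fun y => fderiv ℝ F y v)
        (aux_diff_fderiv_apply hF v) (γ + s • v) w t).differentiableAt
    have := is_const_of_deriv_eq_zero hdiff hconst 1 0
    simpa using this
  -- outer step
  have houter : ∀ s : ℝ,
      deriv (fun s : ℝ => F ((γ + w) + s • v) - F (γ + s • v)) s = 0 := by
    intro s
    have h1 := aux_hasDerivAt_line hFd (γ + w) v s
    have h2' := aux_hasDerivAt_line hFd γ v s
    have h : HasDerivAt (fun s : ℝ => F ((γ + w) + s • v) - F (γ + s • v)) _ s := h1.sub h2'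
    rw [h.deriv]
    have : γ + w + s • v = γ + s • v + w := by abel
    rw [this, hinner s, sub_self]
  have hdiff : Differentiable ℝ (fun s : ℝ => F ((γ + w) + s • v) - F (γ + s • v)) := by
    intro s
    exact ((aux_hasDerivAt_line hFd (γ + w) v s).sub
      (aux_hasDerivAt_line hFd γ v s)).differentiableAt
  have := is_const_of_deriv_eq_zero hdiff houter 1 0
  simp only [one_smul, zero_smul, add_zero] at this
  have heq : γ + w + v = γ + v + w := by abel
  rw [heq] at this
  linarith

lemma aux_key_deriv_zero {F : X → ℝ} (hF : ContDiff ℝ 2 F) (γ v w : X)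
    (hid : ∀ s t : ℝ, F (γ + s • v + t • w) = F (γ + s • v) + F (γ + t • w) - F γ) :
    fderiv ℝ (fderiv ℝ F) γ v w = 0 := by
  have hFd : Differentiable ℝ F := hF.differentiable (by norm_num)
  -- step 1 : fderiv F (γ + s•v) w = fderiv F γ w  for all s
  have hstep1 : ∀ s : ℝ, fderiv ℝ F (γ + s • v) w = fderiv ℝ F γ w := by
    intro s
    have h1 : HasDerivAt (fun t : ℝ => F ((γ + s • v) + t • w))
        (fderiv ℝ F (γ + s • v) w) 0 := by
      simpa using aux_hasDerivAt_line hFd (γ + s • v) w 0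
    have h2 : HasDerivAt (fun t : ℝ => F (γ + s • v) + F (γ + t • w) - F γ)
        (fderiv ℝ F γ w) 0 := by
      have := aux_hasDerivAt_line hFd γ w 0
      simp only [zero_smul, add_zero] at this
      simpa using (this.const_add (F (γ + s • v))).sub_const (F γ)
    have hfun : (fun t : ℝ => F ((γ + s • v) + t • w)) =
        (fun t : ℝ => F (γ + s • v) + F (γ + t • w) - F γ) := by
      funext t; exact hid s t
    rw [hfun] at h1
    exact h1.unique h2
  -- step 2 : differentiate the constant function s ↦ fderiv F (γ + s•v) w at 0
  have h1 : HasDerivAt (fun s : ℝ => fderiv ℝ F (γ + s • v) w)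
      (fderiv ℝ (fun y => fderiv ℝ F y w) γ v) 0 := by
    have := aux_hasDerivAt_line (f := fun y => fderiv ℝ F y w)
      (aux_diff_fderiv_apply hF w) γ v 0
    simpa using this
  have h2 : HasDerivAt (fun s : ℝ => fderiv ℝ F (γ + s • v) w) 0 0 := by
    have hfun : (fun s : ℝ => fderiv ℝ F (γ + s • v) w) =
        (fun _ : ℝ => fderiv ℝ F γ w) := funext fun s => hstep1 s
    rw [hfun]; exact hasDerivAt_const 0 _
  have := h1.unique h2
  rw [aux_fderiv_apply_const hF w] at this
  exact this

lemma aux_sub_second {f g : X → ℝ} (hf : ContDiff ℝ 2 f) (hg : ContDiff ℝ 2 g) (x v w : X) :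
    fderiv ℝ (fderiv ℝ (fun y => f y - g y)) x v w =
      fderiv ℝ (fderiv ℝ f) x v w - fderiv ℝ (fderiv ℝ g) x v w := by
  have hfd : Differentiable ℝ f := hf.differentiable (by norm_num)
  have hgd : Differentiable ℝ g := hg.differentiable (by norm_num)
  have h1 : fderiv ℝ (fun y => f y - g y) = fun y => fderiv ℝ f y - fderiv ℝ g y := by
    funext y; exact fderiv_sub (hfd y) (hgd y)
  rw [h1, fderiv_fun_sub (((hf.fderiv_right (m := 1) (by norm_num)).differentiable one_ne_zero) x)
    (((hg.fderiv_right (m := 1) (by norm_num)).differentiable one_ne_zero) x)]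
  simp

lemma aux_symm2 {f : X → ℝ} (hf : ContDiff ℝ 2 f) (x v w : X) :
    fderiv ℝ (fderiv ℝ f) x v w = fderiv ℝ (fderiv ℝ f) x w v :=
  (hf.contDiffAt.isSymmSndFDerivAt (by norm_num)) v w

end Aux

def truncFun (N : ℕ) (m : Fin N → ℕ) (n : ℕ)
    (γ : (l : Fin N) → Fin (m l) → ℝ) : (l : Fin N) → Fin (m l) → ℝ :=
  fun l => if (l : ℕ) < n then γ l else 0

theorem lq_potential_iff_symmetric_second_derivatives
    (N : ℕ) (hN : 1 ≤ N) (m : Fin N → ℕ)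
    (J : Fin N → ((i : Fin N) → Fin (m i) → ℝ) → ℝ)
    (hJ : ∀ i, ContDiff ℝ 2 (J i)) :
    (∃ Φ : ((i : Fin N) → Fin (m i) → ℝ) → ℝ,
      ∀ (i : Fin N) (γ : (l : Fin N) → Fin (m l) → ℝ) (γi' : Fin (m i) → ℝ),
        J i (Function.update γ i γi') - J i γ =
          Φ (Function.update γ i γi') - Φ γ) ↔
    (∀ (i j : Fin N) (γ v w : (l : Fin N) → Fin (m l) → ℝ),
      (∀ l, l ≠ i → v l = 0) → (∀ l, l ≠ j → w l = 0) →
      fderiv ℝ (fderiv ℝ (J i)) γ v w = fderiv ℝ (fderiv ℝ (J j)) γ v w) := by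
  constructor
  · rintro ⟨Φ, hΦ⟩ i j γ v w hv hw
    by_cases hij : i = j
    · subst hij; rfl
    set F : ((l : Fin N) → Fin (m l) → ℝ) → ℝ := fun x => J i x - J j x with hFdef
    have hF : ContDiff ℝ 2 F := (hJ i).sub (hJ j)
    -- update facts
    have hupdv : ∀ (a : (l : Fin N) → Fin (m l) → ℝ) (s : ℝ),
        Function.update a i (a i + s • v i) = a + s • v := by
      intro a s; funext l
      by_cases hl : l = i
      · subst hl; simp
      · simp [Function.update_of_ne hl, hv l hl]
    have hupdw : ∀ (a : (l : Fin N) → Fin (m l) → ℝ) (t : ℝ),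
        Function.update a j (a j + t • w j) = a + t • w := by
      intro a t; funext l
      by_cases hl : l = j
      · subst hl; simp
      · simp [Function.update_of_ne hl, hw l hl]
    have hid : ∀ s t : ℝ, F (γ + s • v + t • w) = F (γ + s • v) + F (γ + t • w) - F γ := by
      intro s t
      have h1 := hΦ i (γ + t • w) ((γ + t • w) i + s • v i)
      rw [hupdv (γ + t • w) s] at h1
      have hcomm : γ + t • w + s • v = γ + s • v + t • w := by abel
      rw [hcomm] at h1
      have h2 := hΦ i γ (γ i + s • v i)
      rw [hupdv γ s] at h2
      have h3 := hΦ j (γ + s • v) ((γ + s • v) j + t • w j)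
      rw [hupdw (γ + s • v) t] at h3
      have h4 := hΦ j γ (γ j + t • w j)
      rw [hupdw γ t] at h4
      simp only [hFdef]
      linarith
    have hzero := aux_key_deriv_zero hF γ v w hid
    rw [aux_sub_second (hJ i) (hJ j) γ v w] at hzero
    linarith
  · intro H
    set T := truncFun N m with hT
    refine ⟨fun x => ∑ k : Fin N, (J k (T (k + 1) x) - J k (T k x)), ?_⟩
    intro i γ γi'
    set γ' := Function.update γ i γi' with hγ'
    set A : ℕ → ℝ := fun n => J i (T n γ') - J i (T n γ) with hA
    have hTeq : ∀ n : ℕ, n ≤ (i : ℕ) → T n γ' = T n γ := by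
      intro n hn; funext l
      simp only [hT, truncFun]
      split
      · next h => exact Function.update_of_ne (by rintro rfl; omega) _ _
      · rfl
    have hterm : ∀ k : Fin N,
        (J k (T (k + 1) γ') - J k (T k γ')) - (J k (T (k + 1) γ) - J k (T k γ))
          = A (k + 1) - A k := by
      intro k
      rcases lt_trichotomy (k : ℕ) (i : ℕ) with hki | hki | hki
      · rw [hTeq k (le_of_lt hki), hTeq (k + 1) hki, hA]
        simp only
        rw [hTeq k (le_of_lt hki), hTeq (k + 1) hki]
        ring
      · have : k = i := Fin.ext hki
        subst this
        rw [hA]; simp only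
        rw [hTeq k le_rfl]
        ring
      · -- i < k
        have hik : i ≠ k := by intro h; subst h; omega
        set vv : (l : Fin N) → Fin (m l) → ℝ := γ' - γ with hvv
        set ww : (l : Fin N) → Fin (m l) → ℝ := T (k + 1) γ - T k γ with hww
        have hv' : ∀ l, l ≠ i → vv l = 0 := by
          intro l hl
          simp [hvv, hγ', Function.update_of_ne hl]
        have hw' : ∀ l, l ≠ k → ww l = 0 := by
          intro l hl
          have hlk : (l : ℕ) ≠ (k : ℕ) := fun h => hl (Fin.ext h)
          simp only [hww, hT, truncFun, Pi.sub_apply]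
          by_cases h1 : (l : ℕ) < k
          · rw [if_pos (by omega), if_pos h1, sub_self]
          · rw [if_neg (by omega), if_neg h1, sub_self]
        have h2 : ∀ x, fderiv ℝ (fderiv ℝ (fun y => J i y - J k y)) x ww vv = 0 := by
          intro x
          rw [aux_sub_second (hJ i) (hJ k) x ww vv,
            aux_symm2 (hJ i) x ww vv, aux_symm2 (hJ k) x ww vv,
            H i k x vv ww hv' hw', sub_self]
        have hkey := aux_key_zero ((hJ i).sub (hJ k)) (T k γ) vv ww h2
        have hx_v : T k γ + vv = T k γ' := by
          funext l
          simp only [hvv, hT, truncFun, Pi.add_apply, Pi.sub_apply]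
          by_cases h1 : (l : ℕ) < k
          · rw [if_pos h1, if_pos h1]; abel
          · have hli : l ≠ i := by rintro rfl; omega
            rw [if_neg h1, if_neg h1, hγ', Function.update_of_ne hli]
            abel
        have hx_w : T k γ + ww = T (k + 1) γ := by
          simp only [hww]; abel
        have hx_vw : T k γ + vv + ww = T (k + 1) γ' := by
          funext l
          simp only [hvv, hww, hT, truncFun, Pi.add_apply, Pi.sub_apply]
          by_cases h1 : (l : ℕ) < k
          · rw [if_pos h1, if_pos (by omega : (l : ℕ) < k + 1),
              if_pos (by omega : (l : ℕ) < k + 1)]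
            abel
          · by_cases h2' : (l : ℕ) < k + 1
            · rw [if_neg h1, if_pos h2', if_pos h2']; abel
            · have hli : l ≠ i := by rintro rfl; omega
              rw [if_neg h1, if_neg h2', if_neg h2',
                hγ', Function.update_of_ne hli]
              abel
        rw [hx_vw, hx_w, hx_v] at hkey
        rw [hA]; simp only
        linarith
    have hsum : (∑ k : Fin N, (J k (T (k + 1) γ') - J k (T k γ'))) -
        (∑ k : Fin N, (J k (T (k + 1) γ) - J k (T k γ))) = A N - A 0 := by
      rw [← Finset.sum_sub_distrib]
      have h5 : (∑ k : Fin N,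
          ((J k (T (k + 1) γ') - J k (T k γ')) - (J k (T (k + 1) γ) - J k (T k γ))))
            = ∑ k : Fin N, (A (↑k + 1) - A ↑k) :=
        Finset.sum_congr rfl fun k _ => hterm k
      have h6 : (∑ k : Fin N, (A (↑k + 1) - A ↑k))
          = ∑ n ∈ Finset.range N, (A (n + 1) - A n) :=
        Fin.sum_univ_eq_sum_range (fun n => A (n + 1) - A n) N
      rw [h5, h6, Finset.sum_range_sub A N]
    have hA0 : A 0 = 0 := by
      have : T 0 γ' = T 0 γ := by
        funext l; simp [hT, truncFun]
      rw [hA]; simp only [this]; ring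
    have hAN : A N = J i γ' - J i γ := by
      have h1 : T N γ' = γ' := by
        funext l; simp [hT, truncFun, l.isLt]
      have h2 : T N γ = γ := by
        funext l; simp [hT, truncFun, l.isLt]
      rw [hA]; simp only [h1, h2]
    rw [hsum, hA0, hAN]; ring
end

section
/- Consider the two-player scalar LQ game with open-loop information structure, where player i's decision variable is the action pair u^i = (u^i_0, u^i_1) ∈ ℝ². If Q^1_1 = Q^2_1, Q^1_2 = Q^2_2, and (R^1_0)_{12} = (R^2_0)_{12}, (R^1_1)_{12} = (R^2_1)_{12}, then the game is an exact potential game. -/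
/-!
STATEMENT 2: Two-player scalar LQ game with open-loop information structure, horizon 2.
Player `i ∈ {0,1}` (representing players 1,2) chooses actions `u i = (u i 0, u i 1) ∈ ℝ²`.
If `Q¹₁ = Q²₁`, `Q¹₂ = Q²₂`, `(R¹₀)₁₂ = (R²₀)₁₂`, `(R¹₁)₁₂ = (R²₁)₁₂`,
then the game is an exact potential game.
-/

theorem open_loop_scalar_lq_potential_of_conditions
    (A B1 B2 x0 : ℝ)
    (Q : Fin 2 → Fin 3 → ℝ)
    (R : Fin 2 → Fin 2 → Fin 2 → Fin 2 → ℝ)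
    (hQ : ∀ i t, 0 ≤ Q i t)
    (hRsymm : ∀ i t, R i t 0 1 = R i t 1 0)
    (hRown : ∀ t, 0 < R 0 t 0 0 ∧ 0 < R 1 t 1 1)
    (hRother : ∀ t, 0 ≤ R 0 t 1 1 ∧ 0 ≤ R 1 t 0 0)
    (J : Fin 2 → (Fin 2 → ℝ) → (Fin 2 → ℝ) → ℝ)
    (hJ : ∀ i u1 u2,
      J i u1 u2 =
        Q i 0 * x0 ^ 2 + Q i 1 * (A * x0 + B1 * u1 0 + B2 * u2 0) ^ 2 +
          Q i 2 * (A * (A * x0 + B1 * u1 0 + B2 * u2 0) + B1 * u1 1 + B2 * u2 1) ^ 2 +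
          ∑ t : Fin 2,
            (R i t 0 0 * u1 t ^ 2 + 2 * R i t 0 1 * u1 t * u2 t + R i t 1 1 * u2 t ^ 2))
    (hQ1 : Q 0 1 = Q 1 1) (hQ2 : Q 0 2 = Q 1 2)
    (hR0 : R 0 0 0 1 = R 1 0 0 1) (hR1 : R 0 1 0 1 = R 1 1 0 1) :
    ∃ P : (Fin 2 → ℝ) → (Fin 2 → ℝ) → ℝ,
      (∀ u1 u1' u2, J 0 u1 u2 - J 0 u1' u2 = P u1 u2 - P u1' u2) ∧
      (∀ u1 u2 u2', J 1 u1 u2 - J 1 u1 u2' = P u1 u2 - P u1 u2') := by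
  refine ⟨fun u1 u2 =>
    Q 0 1 * (A * x0 + B1 * u1 0 + B2 * u2 0) ^ 2 +
      Q 0 2 * (A * (A * x0 + B1 * u1 0 + B2 * u2 0) + B1 * u1 1 + B2 * u2 1) ^ 2 +
      ∑ t : Fin 2,
        (R 0 t 0 0 * u1 t ^ 2 + 2 * R 0 t 0 1 * u1 t * u2 t + R 1 t 1 1 * u2 t ^ 2),
    ?_, ?_⟩ <;> intro a b c <;>
    simp only [hJ, Fin.sum_univ_two, hQ1, hQ2, hR0, hR1] <;> ring
end

section
/- Consider the two-player scalar LQ game with open-loop information structure, where player i's decision variable is the action pair u^i = (u^i_0, u^i_1) ∈ ℝ². Assume A ≠ 0, B¹ ≠ 0, B² ≠ 0. If the game is an exact potential game, then Q^1_2 = Q^2_2, (R^1_1)_{12} = (R^2_1)_{12}, and B¹B² Q^1_1 + (R^1_0)_{12} = B¹B² Q^2_1 + (R^2_0)_{12}. -/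
/-!
STATEMENT 3: Two-player scalar LQ game with open-loop information structure, horizon 2,
with `A ≠ 0`, `B¹ ≠ 0`, `B² ≠ 0`.  If the game is an exact potential game, then
`Q¹₂ = Q²₂`, `(R¹₁)₁₂ = (R²₁)₁₂`, and
`B¹B² Q¹₁ + (R¹₀)₁₂ = B¹B² Q²₁ + (R²₀)₁₂`.
(Players 1,2 are indexed by `0,1 : Fin 2`.)
-/

theorem open_loop_scalar_lq_necessary_conditions_of_potential
    (A B1 B2 x0 : ℝ)
    (hA : A ≠ 0) (hB1 : B1 ≠ 0) (hB2 : B2 ≠ 0)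
    (Q : Fin 2 → Fin 3 → ℝ)
    (R : Fin 2 → Fin 2 → Fin 2 → Fin 2 → ℝ)
    (hQ : ∀ i t, 0 ≤ Q i t)
    (hRsymm : ∀ i t, R i t 0 1 = R i t 1 0)
    (hRown : ∀ t, 0 < R 0 t 0 0 ∧ 0 < R 1 t 1 1)
    (hRother : ∀ t, 0 ≤ R 0 t 1 1 ∧ 0 ≤ R 1 t 0 0)
    (J : Fin 2 → (Fin 2 → ℝ) → (Fin 2 → ℝ) → ℝ)
    (hJ : ∀ i u1 u2,
      J i u1 u2 =
        Q i 0 * x0 ^ 2 + Q i 1 * (A * x0 + B1 * u1 0 + B2 * u2 0) ^ 2 +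
          Q i 2 * (A * (A * x0 + B1 * u1 0 + B2 * u2 0) + B1 * u1 1 + B2 * u2 1) ^ 2 +
          ∑ t : Fin 2,
            (R i t 0 0 * u1 t ^ 2 + 2 * R i t 0 1 * u1 t * u2 t + R i t 1 1 * u2 t ^ 2))
    (hpot : ∃ P : (Fin 2 → ℝ) → (Fin 2 → ℝ) → ℝ,
      (∀ u1 u1' u2, J 0 u1 u2 - J 0 u1' u2 = P u1 u2 - P u1' u2) ∧
      (∀ u1 u2 u2', J 1 u1 u2 - J 1 u1 u2' = P u1 u2 - P u1 u2')) :
    Q 0 2 = Q 1 2 ∧ R 0 1 0 1 = R 1 1 0 1 ∧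
      B1 * B2 * Q 0 1 + R 0 0 0 1 = B1 * B2 * Q 1 1 + R 1 0 0 1 := by
  obtain ⟨P, hP1, hP2⟩ := hpot
  have key : ∀ u1 u2 : Fin 2 → ℝ,
      J 0 u1 u2 - J 0 0 u2 - (J 0 u1 0 - J 0 0 0)
        = J 1 u1 u2 - J 1 u1 0 - (J 1 0 u2 - J 1 0 0) := by
    intro u1 u2
    have h1 := hP1 u1 0 u2
    have h2 := hP1 u1 0 0
    have h3 := hP2 u1 u2 0
    have h4 := hP2 0 u2 0
    linarith
  have e1 := key ![0,1] ![0,1]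
  have e2 := key ![1,0] ![0,1]
  have e3 := key ![1,0] ![1,0]
  simp [hJ, Fin.sum_univ_two] at e1 e2 e3
  ring_nf at e1 e2 e3
  have hQ2 : Q 0 2 = Q 1 2 := by
    have hne : A * B1 * B2 ≠ 0 := by
      exact mul_ne_zero (mul_ne_zero hA hB1) hB2
    have : A * B1 * B2 * Q 0 2 = A * B1 * B2 * Q 1 2 := by linarith [e2]
    exact mul_left_cancel₀ hne this
  refine ⟨hQ2, ?_, ?_⟩
  · linear_combination e1 / 2 - B1 * B2 * hQ2
  · linear_combination e3 / 2 - A ^ 2 * B1 * B2 * hQ2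
end

section
/- Consider the two-player scalar LQ game with full state linear feedback information structure, where player i's decision variable is K^i = (K^i_0, K^i_1) ∈ ℝ² and the actions are u^i_t = −K^i_t x_t. Assume A ≠ 0, B¹ ≠ 0, B² ≠ 0, and x_0 ≠ 0. If the game is an exact potential game, then Q^1_2 = Q^2_2, (R^1_1)_{11} = (R^2_1)_{11}, (R^1_1)_{22} = (R^2_1)_{22}, (R^1_1)_{12} = (R^2_1)_{12}, and B¹B² Q^1_1 + (R^1_0)_{12} = B¹B² Q^2_1 + (R^2_0)_{12}. In particular, under full state feedback the off-diagonal AND both diagonal entries of the time-1 action-cost matrices of the two players must coincide. -/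
/-!
STATEMENT 4: Two-player scalar LQ game with full state linear feedback, horizon 2.
Player `i`'s decision variable is `K i = (K i 0, K i 1) ∈ ℝ²`, with actions
`uⁱ_t = −Kⁱ_t x_t`, so `x₁ = (A − B¹K¹₀ − B²K²₀)x₀` and `x₂ = (A − B¹K¹₁ − B²K²₁)x₁`.
Assume `A ≠ 0`, `B¹ ≠ 0`, `B² ≠ 0`, `x₀ ≠ 0`.  If the game is an exact potential game
then `Q¹₂ = Q²₂`, `(R¹₁)₁₁ = (R²₁)₁₁`, `(R¹₁)₂₂ = (R²₁)₂₂`, `(R¹₁)₁₂ = (R²₁)₁₂`, and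
`B¹B² Q¹₁ + (R¹₀)₁₂ = B¹B² Q²₁ + (R²₀)₁₂`.
(Players 1,2 are indexed by `0,1 : Fin 2`.)
-/

private lemma aux_mul_eq_zero {x c : ℝ} (h : x * c = 0) (hc : c ≠ 0) : x = 0 := by
  rcases mul_eq_zero.mp h with h' | h'
  · exact h'
  · exact absurd h' hc

theorem feedback_scalar_lq_necessary_conditions_of_potential
    (A B1 B2 x0 : ℝ)
    (hA : A ≠ 0) (hB1 : B1 ≠ 0) (hB2 : B2 ≠ 0) (hx0 : x0 ≠ 0)
    (Q : Fin 2 → Fin 3 → ℝ)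
    (R : Fin 2 → Fin 2 → Fin 2 → Fin 2 → ℝ)
    (hQ : ∀ i t, 0 ≤ Q i t)
    (hRsymm : ∀ i t, R i t 0 1 = R i t 1 0)
    (hRown : ∀ t, 0 < R 0 t 0 0 ∧ 0 < R 1 t 1 1)
    (hRother : ∀ t, 0 ≤ R 0 t 1 1 ∧ 0 ≤ R 1 t 0 0)
    (J : Fin 2 → (Fin 2 → ℝ) → (Fin 2 → ℝ) → ℝ)
    (hJ : ∀ i K1 K2,
      J i K1 K2 =
        Q i 0 * x0 ^ 2 + Q i 1 * ((A - B1 * K1 0 - B2 * K2 0) * x0) ^ 2 +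
          Q i 2 * ((A - B1 * K1 1 - B2 * K2 1) * ((A - B1 * K1 0 - B2 * K2 0) * x0)) ^ 2 +
          (R i 0 0 0 * (K1 0 * x0) ^ 2 + 2 * R i 0 0 1 * (K1 0 * x0) * (K2 0 * x0) +
            R i 0 1 1 * (K2 0 * x0) ^ 2) +
          (R i 1 0 0 * (K1 1 * ((A - B1 * K1 0 - B2 * K2 0) * x0)) ^ 2 +
            2 * R i 1 0 1 * (K1 1 * ((A - B1 * K1 0 - B2 * K2 0) * x0)) *
              (K2 1 * ((A - B1 * K1 0 - B2 * K2 0) * x0)) +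
            R i 1 1 1 * (K2 1 * ((A - B1 * K1 0 - B2 * K2 0) * x0)) ^ 2))
    (hpot : ∃ P : (Fin 2 → ℝ) → (Fin 2 → ℝ) → ℝ,
      (∀ K1 K1' K2, J 0 K1 K2 - J 0 K1' K2 = P K1 K2 - P K1' K2) ∧
      (∀ K1 K2 K2', J 1 K1 K2 - J 1 K1 K2' = P K1 K2 - P K1 K2')) :
    Q 0 2 = Q 1 2 ∧
      R 0 1 0 0 = R 1 1 0 0 ∧ R 0 1 1 1 = R 1 1 1 1 ∧ R 0 1 0 1 = R 1 1 0 1 ∧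
      B1 * B2 * Q 0 1 + R 0 0 0 1 = B1 * B2 * Q 1 1 + R 1 0 0 1 := by
  obtain ⟨P, h0, h1⟩ := hpot
  have key : ∀ K1 K1' K2 K2' : Fin 2 → ℝ,
      J 0 K1 K2 - J 0 K1' K2 - (J 0 K1 K2' - J 0 K1' K2') =
      J 1 K1 K2 - J 1 K1 K2' - (J 1 K1' K2 - J 1 K1' K2') := by
    intro K1 K1' K2 K2'
    have a1 := h0 K1 K1' K2
    have a2 := h0 K1 K1' K2'
    have b1 := h1 K1 K2 K2'
    have b2 := h1 K1' K2 K2'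
    linarith
  have hx2 : x0 ^ 2 ≠ 0 := pow_ne_zero 2 hx0
  -- instances for Q2 and R 1 0 0
  have e11 := key ![0, 1] ![0, 0] ![1, 0] ![0, 0]
  have em1 := key ![0, -1] ![0, 0] ![1, 0] ![0, 0]
  have e1m := key ![0, 1] ![0, 0] ![-1, 0] ![0, 0]
  have emm := key ![0, -1] ![0, 0] ![-1, 0] ![0, 0]
  -- instances for R 1 1 1
  have f11 := key ![1, 0] ![0, 0] ![0, 1] ![0, 0]
  have fm1 := key ![-1, 0] ![0, 0] ![0, 1] ![0, 0]
  have f1m := key ![1, 0] ![0, 0] ![0, -1] ![0, 0]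
  have fmm := key ![-1, 0] ![0, 0] ![0, -1] ![0, 0]
  -- instance for R 1 0 1
  have g := key ![0, 1] ![0, 0] ![0, 1] ![0, 0]
  -- instance for the time-0 condition
  have h := key ![1, 0] ![0, 0] ![1, 0] ![0, 0]
  simp only [hJ, Matrix.cons_val_zero, Matrix.cons_val_one, Matrix.head_cons]
    at e11 em1 e1m emm f11 fm1 f1m fmm g h
  have hq : Q 0 2 = Q 1 2 := by
    have hz : (Q 0 2 - Q 1 2) * (16 * A ^ 2 * B1 * B2 * x0 ^ 2) = 0 := by
      linear_combination e11 - em1 - e1m + emm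
    have hc : (16 * A ^ 2 * B1 * B2 * x0 ^ 2) ≠ 0 := by
      simp [hA, hB1, hB2, hx0, pow_eq_zero_iff]
    exact sub_eq_zero.mp (aux_mul_eq_zero hz hc)
  have hr00 : R 0 1 0 0 = R 1 1 0 0 := by
    have hz : (R 0 1 0 0 - R 1 1 0 0) * (4 * B2 ^ 2 * x0 ^ 2) = 0 := by
      linear_combination e11 + em1 + e1m + emm - 4 * B1 ^ 2 * B2 ^ 2 * x0 ^ 2 * hq
    have hc : (4 * B2 ^ 2 * x0 ^ 2) ≠ 0 := by
      simp [hB2, hx0, pow_eq_zero_iff]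
    exact sub_eq_zero.mp (aux_mul_eq_zero hz hc)
  have hr11 : R 0 1 1 1 = R 1 1 1 1 := by
    have hz : (R 0 1 1 1 - R 1 1 1 1) * (4 * B1 ^ 2 * x0 ^ 2) = 0 := by
      linear_combination f11 + fm1 + f1m + fmm - 4 * B1 ^ 2 * B2 ^ 2 * x0 ^ 2 * hq
    have hc : (4 * B1 ^ 2 * x0 ^ 2) ≠ 0 := by
      simp [hB1, hx0, pow_eq_zero_iff]
    exact sub_eq_zero.mp (aux_mul_eq_zero hz hc)
  have hr01 : R 0 1 0 1 = R 1 1 0 1 := by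
    have hz : (R 0 1 0 1 - R 1 1 0 1) * (2 * A ^ 2 * x0 ^ 2) = 0 := by
      linear_combination g - 2 * B1 * B2 * A ^ 2 * x0 ^ 2 * hq
    have hc : (2 * A ^ 2 * x0 ^ 2) ≠ 0 := by
      simp [hA, hx0, pow_eq_zero_iff]
    exact sub_eq_zero.mp (aux_mul_eq_zero hz hc)
  have hcross : B1 * B2 * Q 0 1 + R 0 0 0 1 = B1 * B2 * Q 1 1 + R 1 0 0 1 := by
    have hz : (B1 * B2 * Q 0 1 + R 0 0 0 1 - (B1 * B2 * Q 1 1 + R 1 0 0 1)) * (2 * x0 ^ 2) = 0 := by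
      linear_combination h - 2 * A ^ 2 * B1 * B2 * x0 ^ 2 * hq
    have hc : (2 * x0 ^ 2) ≠ 0 := by
      simp [hx0, pow_eq_zero_iff]
    exact sub_eq_zero.mp (aux_mul_eq_zero hz hc)
  exact ⟨hq, hr00, hr11, hr01, hcross⟩
end

section
/- Consider the decoupled LQ game with decoupled state feedback information structure. If conditions (C1) and (C2) hold, then the game is an exact potential game. -/
/-!
STATEMENT 5: The decoupled LQ game with decoupled state feedback is an exact potential
game whenever conditions (C1) and (C2) hold.
-/

open Matrix

/-- State trajectory of a single player with decoupled dynamics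
`x_{t+1} = A x_t + u_t • b`, under decoupled linear state feedback `u_t = -⟨k_t, x_t⟩`. -/
noncomputable def traj {ni : ℕ} (Ai : Matrix (Fin ni) (Fin ni) ℝ) (bi : Fin ni → ℝ)
    (x0i : Fin ni → ℝ) (tf : ℕ) (ki : Fin tf → Fin ni → ℝ) : ℕ → Fin ni → ℝ
  | 0 => x0i
  | t + 1 =>
      Ai.mulVec (traj Ai bi x0i tf ki t) +
        (-((if h : t < tf then ki ⟨t, h⟩ else 0) ⬝ᵥ traj Ai bi x0i tf ki t)) • bi

/-- Action of a single player at time `t`: `uⁱ_t = -⟨kⁱ_t, xⁱ_t⟩`. -/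
noncomputable def act {ni : ℕ} (Ai : Matrix (Fin ni) (Fin ni) ℝ) (bi : Fin ni → ℝ)
    (x0i : Fin ni → ℝ) (tf : ℕ) (ki : Fin tf → Fin ni → ℝ) (t : Fin tf) : ℝ :=
  -(ki t ⬝ᵥ traj Ai bi x0i tf ki (t : ℕ))

/-- Loss of player `i` in the decoupled LQ game with decoupled state feedback. -/
noncomputable def lossJ (N tf : ℕ) (n : Fin N → ℕ)
    (A : ∀ i, Matrix (Fin (n i)) (Fin (n i)) ℝ) (b : ∀ i, Fin (n i) → ℝ)
    (x0 : ∀ i, Fin (n i) → ℝ)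
    (Q : Fin N → Fin (tf + 1) →
      Matrix ((j : Fin N) × Fin (n j)) ((j : Fin N) × Fin (n j)) ℝ)
    (R : Fin N → Fin tf → Matrix (Fin N) (Fin N) ℝ)
    (M : Fin tf → ℝ) (d : Fin (tf + 1) → ((j : Fin N) × Fin (n j)) → ℝ)
    (i : Fin N) (k : ∀ j, Fin tf → Fin (n j) → ℝ) : ℝ :=
  (∑ t : Fin (tf + 1),
      (fun p : (j : Fin N) × Fin (n j) =>
          traj (A p.1) (b p.1) (x0 p.1) tf (k p.1) (t : ℕ) p.2 - d t p) ⬝ᵥ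
        (Q i t).mulVec
          (fun p : (j : Fin N) × Fin (n j) =>
            traj (A p.1) (b p.1) (x0 p.1) tf (k p.1) (t : ℕ) p.2 - d t p)) +
    ∑ t : Fin tf,
      ((∑ j, ∑ h,
          act (A j) (b j) (x0 j) tf (k j) t * R i t j h *
            act (A h) (b h) (x0 h) tf (k h) t) +
        M t * act (A i) (b i) (x0 i) tf (k i) t)

private lemma symm_quad_diff {ι : Type*} [Fintype ι] (Q Q' : Matrix ι ι ℝ)
    (hQ : Q.IsSymm) (hQ' : Q'.IsSymm) (a c : ι → ℝ)
    (hrow : ∀ p, a p ≠ c p → ∀ q, Q p q = Q' p q) :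
    a ⬝ᵥ Q.mulVec a - c ⬝ᵥ Q.mulVec c = a ⬝ᵥ Q'.mulVec a - c ⬝ᵥ Q'.mulVec c := by
  have key : ∀ (B : Matrix ι ι ℝ), B.IsSymm →
      a ⬝ᵥ B.mulVec a - c ⬝ᵥ B.mulVec c = (a - c) ⬝ᵥ B.mulVec (a + c) := by
    intro B hB
    have hsym : ∀ v w : ι → ℝ, v ⬝ᵥ B.mulVec w = w ⬝ᵥ B.mulVec v := by
      intro v w
      simp only [dotProduct, mulVec, Finset.mul_sum]
      rw [Finset.sum_comm]
      refine Finset.sum_congr rfl fun p _ => Finset.sum_congr rfl fun q _ => ?_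
      rw [← hB.apply q p]; ring
    rw [mulVec_add, dotProduct_add, sub_dotProduct, sub_dotProduct,
      hsym c a]
    ring
  rw [key Q hQ, key Q' hQ']
  refine Finset.sum_congr rfl fun p _ => ?_
  by_cases h : a p = c p
  · simp [h]
  · congr 1
    simp only [mulVec, dotProduct]
    exact Finset.sum_congr rfl fun q _ => by rw [hrow p h q]

private lemma quad_as_dot {N : ℕ} (u : Fin N → ℝ) (B : Matrix (Fin N) (Fin N) ℝ) :
    (∑ j, ∑ h, u j * B j h * u h) = u ⬝ᵥ B.mulVec u := by
  simp only [dotProduct, mulVec, Finset.mul_sum]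
  exact Finset.sum_congr rfl fun j _ => Finset.sum_congr rfl fun h _ => by ring

theorem decoupled_lq_feedback_potential_of_C1_C2
    (N tf : ℕ) (hN : 1 ≤ N) (htf : 1 ≤ tf)
    (n : Fin N → ℕ)
    (A : ∀ i, Matrix (Fin (n i)) (Fin (n i)) ℝ)
    (b : ∀ i, Fin (n i) → ℝ)
    (x0 : ∀ i, Fin (n i) → ℝ)
    (Q : Fin N → Fin (tf + 1) →
      Matrix ((j : Fin N) × Fin (n j)) ((j : Fin N) × Fin (n j)) ℝ)
    (hQ : ∀ i t, (Q i t).PosSemidef)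
    (R : Fin N → Fin tf → Matrix (Fin N) (Fin N) ℝ)
    (hRsymm : ∀ i t, (R i t).IsSymm)
    (hRown : ∀ i t, 0 < R i t i i)
    (hRother : ∀ i t l, l ≠ i → 0 ≤ R i t l l)
    (M : Fin tf → ℝ) (hM : ∀ t, 0 ≤ M t)
    (d : Fin (tf + 1) → ((j : Fin N) × Fin (n j)) → ℝ)
    (hC1 : ∀ i j, i ≠ j → ∀ (t : Fin (tf + 1)) (a : Fin (n i)) (c : Fin (n j)),
      Q i t ⟨i, a⟩ ⟨j, c⟩ = Q j t ⟨i, a⟩ ⟨j, c⟩)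
    (hC2 : ∀ i j, i ≠ j → ∀ t : Fin tf, R i t i j = R j t i j) :
    ∃ P : (∀ j, Fin tf → Fin (n j) → ℝ) → ℝ,
      ∀ (i : Fin N) (k : ∀ j, Fin tf → Fin (n j) → ℝ) (ki' : Fin tf → Fin (n i) → ℝ),
        lossJ N tf n A b x0 Q R M d i (Function.update k i ki') -
            lossJ N tf n A b x0 Q R M d i k =
          P (Function.update k i ki') - P k := by
  classical
  -- symmetry of each Q i t
  have hQsym : ∀ i t, (Q i t).IsSymm := by
    intro i t
    ext p q
    rw [transpose_apply]
    have := (hQ i t).1.apply p q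
    simpa using this
  -- glued state matrix
  set S : Fin (tf + 1) → Matrix ((j : Fin N) × Fin (n j)) ((j : Fin N) × Fin (n j)) ℝ :=
    fun t => Matrix.of fun p q => Q p.1 t p q with hS
  have hSsym : ∀ t, (S t).IsSymm := by
    intro t
    ext p q
    rw [transpose_apply]
    show Q q.1 t q p = Q p.1 t p q
    obtain ⟨pj, pa⟩ := p; obtain ⟨qj, qa⟩ := q
    rcases eq_or_ne pj qj with h | h
    · subst h
      exact (hQsym pj t).apply _ _
    · rw [(hQsym qj t).apply ⟨pj, pa⟩ ⟨qj, qa⟩]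
      exact (hC1 pj qj h t pa qa).symm
  -- glued control matrix
  set T : Fin tf → Matrix (Fin N) (Fin N) ℝ :=
    fun t => Matrix.of fun j h => R j t j h with hT
  have hTsym : ∀ t, (T t).IsSymm := by
    intro t
    ext j h
    rw [transpose_apply]
    show R h t h j = R j t j h
    rcases eq_or_ne h j with e | e
    · subst e; rfl
    · rw [hC2 h j e t]
      exact (hRsymm j t).apply j h
  -- trajectory / action abbreviations
  set y : (∀ j, Fin tf → Fin (n j) → ℝ) → Fin (tf + 1) → ((j : Fin N) × Fin (n j)) → ℝ :=
    fun k t p => traj (A p.1) (b p.1) (x0 p.1) tf (k p.1) (t : ℕ) p.2 - d t p with hy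
  set u : (∀ j, Fin tf → Fin (n j) → ℝ) → Fin tf → Fin N → ℝ :=
    fun k t j => act (A j) (b j) (x0 j) tf (k j) t with hu
  refine ⟨fun k => (∑ t, y k t ⬝ᵥ (S t).mulVec (y k t)) +
      ∑ t, (u k t ⬝ᵥ (T t).mulVec (u k t) + M t * ∑ j, u k t j), ?_⟩
  intro i k ki'
  set k' := Function.update k i ki' with hk'
  have hkj : ∀ j, j ≠ i → k' j = k j := fun j hj => Function.update_of_ne hj _ _
  have hyne : ∀ (t : Fin (tf + 1)) p, (p : (j : Fin N) × Fin (n j)).1 ≠ i →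
      y k' t p = y k t p := by
    intro t p hp
    simp only [hy]
    rw [hkj p.1 hp]
  have hune : ∀ (t : Fin tf) j, j ≠ i → u k' t j = u k t j := by
    intro t j hj
    simp only [hu]
    rw [hkj j hj]
  -- per-time state equality
  have Hstate : ∀ t : Fin (tf + 1),
      y k' t ⬝ᵥ (Q i t).mulVec (y k' t) - y k t ⬝ᵥ (Q i t).mulVec (y k t) =
      y k' t ⬝ᵥ (S t).mulVec (y k' t) - y k t ⬝ᵥ (S t).mulVec (y k t) := by
    intro t
    refine symm_quad_diff _ _ (hQsym i t) (hSsym t) _ _ ?_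
    intro p hp q
    have hpi : p.1 = i := by
      by_contra h
      exact hp (hyne t p h)
    obtain ⟨pj, pa⟩ := p
    cases hpi
    rfl
  -- per-time control quadratic equality
  have Hctrl : ∀ t : Fin tf,
      u k' t ⬝ᵥ (R i t).mulVec (u k' t) - u k t ⬝ᵥ (R i t).mulVec (u k t) =
      u k' t ⬝ᵥ (T t).mulVec (u k' t) - u k t ⬝ᵥ (T t).mulVec (u k t) := by
    intro t
    refine symm_quad_diff _ _ (hRsymm i t) (hTsym t) _ _ ?_
    intro j hj q
    have hji : j = i := by
      by_contra h
      exact hj (hune t j h)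
    cases hji
    rfl
  -- per-time linear equality
  have Hlin : ∀ t : Fin tf,
      M t * u k' t i - M t * u k t i = M t * (∑ j, u k' t j) - M t * (∑ j, u k t j) := by
    intro t
    rw [← mul_sub, ← mul_sub, ← Finset.sum_sub_distrib]
    congr 1
    rw [Finset.sum_eq_single i]
    · intro j _ hj
      rw [hune t j hj, sub_self]
    · intro h; exact absurd (Finset.mem_univ i) h
  -- assemble
  simp only [lossJ]
  have rw1 : ∀ (kk : ∀ j, Fin tf → Fin (n j) → ℝ) (t : Fin (tf + 1)),
      ((fun p : (j : Fin N) × Fin (n j) =>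
          traj (A p.1) (b p.1) (x0 p.1) tf (kk p.1) (t : ℕ) p.2 - d t p) ⬝ᵥ
        (Q i t).mulVec
          (fun p : (j : Fin N) × Fin (n j) =>
            traj (A p.1) (b p.1) (x0 p.1) tf (kk p.1) (t : ℕ) p.2 - d t p)) =
      y kk t ⬝ᵥ (Q i t).mulVec (y kk t) := fun _ _ => rfl
  have rw2 : ∀ (kk : ∀ j, Fin tf → Fin (n j) → ℝ) (t : Fin tf),
      (∑ j, ∑ h, act (A j) (b j) (x0 j) tf (kk j) t * R i t j h *
          act (A h) (b h) (x0 h) tf (kk h) t) =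
      u kk t ⬝ᵥ (R i t).mulVec (u kk t) := fun kk t => quad_as_dot _ _
  have rw3 : ∀ (kk : ∀ j, Fin tf → Fin (n j) → ℝ) (t : Fin tf),
      act (A i) (b i) (x0 i) tf (kk i) t = u kk t i := fun _ _ => rfl
  simp only [rw1, rw2, rw3]
  have E1 : (∑ t, y k' t ⬝ᵥ (Q i t).mulVec (y k' t)) -
      (∑ t, y k t ⬝ᵥ (Q i t).mulVec (y k t)) =
      (∑ t, y k' t ⬝ᵥ (S t).mulVec (y k' t)) - (∑ t, y k t ⬝ᵥ (S t).mulVec (y k t)) := by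
    rw [← Finset.sum_sub_distrib, ← Finset.sum_sub_distrib]
    exact Finset.sum_congr rfl fun t _ => Hstate t
  have E2 : (∑ t, (u k' t ⬝ᵥ (R i t).mulVec (u k' t) + M t * u k' t i)) -
      (∑ t, (u k t ⬝ᵥ (R i t).mulVec (u k t) + M t * u k t i)) =
      (∑ t, (u k' t ⬝ᵥ (T t).mulVec (u k' t) + M t * ∑ j, u k' t j)) -
      (∑ t, (u k t ⬝ᵥ (T t).mulVec (u k t) + M t * ∑ j, u k t j)) := by
    rw [← Finset.sum_sub_distrib, ← Finset.sum_sub_distrib]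
    refine Finset.sum_congr rfl fun t _ => ?_
    have := Hctrl t
    have := Hlin t
    ring_nf
    ring_nf at this ⊢
    linarith [Hctrl t, Hlin t]
  linarith [E1, E2]
end

section
/- Consider the decoupled LQ game with decoupled state feedback information structure satisfying conditions (C1) and (C2). Then the assembled function Π(k) = Σ_{t=0}^{t_f} (x_t − d_t)ᵀ Q_t (x_t − d_t) + Σ_{t=0}^{t_f−1} ( u_tᵀ R_t u_t + M_t Σ_{i=1}^N u^i_t ) is an exact potential function for the game. -/
open Matrix

/-- The assembled potential function
`Π(k) = Σ_t (x_t − d_t)ᵀ Q_t (x_t − d_t) + Σ_t (u_tᵀ R_t u_t + M_t Σ_i uⁱ_t)`,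
where the assembled matrices have blocks `(Q_t)_{ij} = (Qⁱ_t)_{ij}` and
entries `(R_t)_{ij} = (Rⁱ_t)_{ij}` (the row block/index selects the player). -/
noncomputable def potentialFn (N tf : ℕ) (n : Fin N → ℕ)
    (A : ∀ i, Matrix (Fin (n i)) (Fin (n i)) ℝ) (b : ∀ i, Fin (n i) → ℝ)
    (x0 : ∀ i, Fin (n i) → ℝ)
    (Q : Fin N → Fin (tf + 1) →
      Matrix ((j : Fin N) × Fin (n j)) ((j : Fin N) × Fin (n j)) ℝ)
    (R : Fin N → Fin tf → Matrix (Fin N) (Fin N) ℝ)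
    (M : Fin tf → ℝ) (d : Fin (tf + 1) → ((j : Fin N) × Fin (n j)) → ℝ)
    (k : ∀ j, Fin tf → Fin (n j) → ℝ) : ℝ :=
  (∑ t : Fin (tf + 1),
      (fun p : (j : Fin N) × Fin (n j) =>
          traj (A p.1) (b p.1) (x0 p.1) tf (k p.1) (t : ℕ) p.2 - d t p) ⬝ᵥ
        (Matrix.of fun p q : (j : Fin N) × Fin (n j) => Q p.1 t p q).mulVec
          (fun p : (j : Fin N) × Fin (n j) =>
            traj (A p.1) (b p.1) (x0 p.1) tf (k p.1) (t : ℕ) p.2 - d t p)) +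
    ∑ t : Fin tf,
      ((∑ j, ∑ h,
          act (A j) (b j) (x0 j) tf (k j) t * R j t j h *
            act (A h) (b h) (x0 h) tf (k h) t) +
        M t * ∑ i, act (A i) (b i) (x0 i) tf (k i) t)

lemma quad_diff {ι : Type*} [Fintype ι] (v w : ι → ℝ) (Qi Qa : Matrix ι ι ℝ)
    (h : ∀ p q, v p * ((Qi p q - Qa p q) * v q) = w p * ((Qi p q - Qa p q) * w q)) :
    v ⬝ᵥ Qi.mulVec v - v ⬝ᵥ Qa.mulVec v = w ⬝ᵥ Qi.mulVec w - w ⬝ᵥ Qa.mulVec w := by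
  simp only [dotProduct, Matrix.mulVec, Finset.mul_sum]
  rw [← Finset.sum_sub_distrib, ← Finset.sum_sub_distrib]
  refine Finset.sum_congr rfl fun p _ => ?_
  rw [← Finset.sum_sub_distrib, ← Finset.sum_sub_distrib]
  refine Finset.sum_congr rfl fun q _ => ?_
  linear_combination h p q

/-!
STATEMENT 6: Under conditions (C1) and (C2), the assembled function `potentialFn` is an
exact potential function for the decoupled LQ game with decoupled state feedback.
-/

theorem decoupled_lq_feedback_assembled_is_potential
    (N tf : ℕ) (hN : 1 ≤ N) (htf : 1 ≤ tf)
    (n : Fin N → ℕ)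
    (A : ∀ i, Matrix (Fin (n i)) (Fin (n i)) ℝ)
    (b : ∀ i, Fin (n i) → ℝ)
    (x0 : ∀ i, Fin (n i) → ℝ)
    (Q : Fin N → Fin (tf + 1) →
      Matrix ((j : Fin N) × Fin (n j)) ((j : Fin N) × Fin (n j)) ℝ)
    (hQ : ∀ i t, (Q i t).PosSemidef)
    (R : Fin N → Fin tf → Matrix (Fin N) (Fin N) ℝ)
    (hRsymm : ∀ i t, (R i t).IsSymm)
    (hRown : ∀ i t, 0 < R i t i i)
    (hRother : ∀ i t l, l ≠ i → 0 ≤ R i t l l)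
    (M : Fin tf → ℝ) (hM : ∀ t, 0 ≤ M t)
    (d : Fin (tf + 1) → ((j : Fin N) × Fin (n j)) → ℝ)
    (hC1 : ∀ i j, i ≠ j → ∀ (t : Fin (tf + 1)) (a : Fin (n i)) (c : Fin (n j)),
      Q i t ⟨i, a⟩ ⟨j, c⟩ = Q j t ⟨i, a⟩ ⟨j, c⟩)
    (hC2 : ∀ i j, i ≠ j → ∀ t : Fin tf, R i t i j = R j t i j) :
    ∀ (i : Fin N) (k : ∀ j, Fin tf → Fin (n j) → ℝ) (ki' : Fin tf → Fin (n i) → ℝ),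
      lossJ N tf n A b x0 Q R M d i (Function.update k i ki') -
          lossJ N tf n A b x0 Q R M d i k =
        potentialFn N tf n A b x0 Q R M d (Function.update k i ki') -
          potentialFn N tf n A b x0 Q R M d k := by
  --

  intro i k ki'
  set k' := Function.update k i ki' with hk'def
  have hkj : ∀ j, j ≠ i → k' j = k j := fun j hj => Function.update_of_ne hj _ _
  have hsym : ∀ (j : Fin N) (t : Fin (tf + 1)) p q, Q j t p q = Q j t q p := by
    intro j t p q
    simpa using (hQ j t).1.apply q p
  suffices h : lossJ N tf n A b x0 Q R M d i k' - potentialFn N tf n A b x0 Q R M d k' =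
      lossJ N tf n A b x0 Q R M d i k - potentialFn N tf n A b x0 Q R M d k by
    linarith
  simp only [lossJ, potentialFn]
  have hQpart : ∀ (kk : ∀ j, Fin tf → Fin (n j) → ℝ), (∀ j, j ≠ i → kk j = k j) →
      (∑ t : Fin (tf + 1),
        (fun p : (j : Fin N) × Fin (n j) =>
            traj (A p.1) (b p.1) (x0 p.1) tf (kk p.1) (t : ℕ) p.2 - d t p) ⬝ᵥ
          (Q i t).mulVec
            (fun p : (j : Fin N) × Fin (n j) =>
              traj (A p.1) (b p.1) (x0 p.1) tf (kk p.1) (t : ℕ) p.2 - d t p)) -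
      (∑ t : Fin (tf + 1),
        (fun p : (j : Fin N) × Fin (n j) =>
            traj (A p.1) (b p.1) (x0 p.1) tf (kk p.1) (t : ℕ) p.2 - d t p) ⬝ᵥ
          (Matrix.of fun p q : (j : Fin N) × Fin (n j) => Q p.1 t p q).mulVec
            (fun p : (j : Fin N) × Fin (n j) =>
              traj (A p.1) (b p.1) (x0 p.1) tf (kk p.1) (t : ℕ) p.2 - d t p)) =
      (∑ t : Fin (tf + 1),
        (fun p : (j : Fin N) × Fin (n j) =>
            traj (A p.1) (b p.1) (x0 p.1) tf (k p.1) (t : ℕ) p.2 - d t p) ⬝ᵥ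
          (Q i t).mulVec
            (fun p : (j : Fin N) × Fin (n j) =>
              traj (A p.1) (b p.1) (x0 p.1) tf (k p.1) (t : ℕ) p.2 - d t p)) -
      (∑ t : Fin (tf + 1),
        (fun p : (j : Fin N) × Fin (n j) =>
            traj (A p.1) (b p.1) (x0 p.1) tf (k p.1) (t : ℕ) p.2 - d t p) ⬝ᵥ
          (Matrix.of fun p q : (j : Fin N) × Fin (n j) => Q p.1 t p q).mulVec
            (fun p : (j : Fin N) × Fin (n j) =>
              traj (A p.1) (b p.1) (x0 p.1) tf (k p.1) (t : ℕ) p.2 - d t p)) := by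
    intro kk hkk
    rw [← Finset.sum_sub_distrib, ← Finset.sum_sub_distrib]
    refine Finset.sum_congr rfl fun t _ => ?_
    refine quad_diff _ _ _ _ fun p q => ?_
    rcases p with ⟨pj, pa⟩
    rcases q with ⟨qj, qa⟩
    by_cases hpj : pj = i
    · subst hpj
      simp
    · by_cases hqj : qj = i
      · subst hqj
        have hz : Q qj t ⟨pj, pa⟩ ⟨qj, qa⟩ = Q pj t ⟨pj, pa⟩ ⟨qj, qa⟩ := by
          rw [hsym qj, hC1 qj pj (fun h => hpj h.symm) t, ← hsym pj]
        simp [Matrix.of_apply, hz]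
      · simp only [Matrix.of_apply, hkk pj hpj, hkk qj hqj]
  have hRpart : ∀ (kk : ∀ j, Fin tf → Fin (n j) → ℝ), (∀ j, j ≠ i → kk j = k j) →
      (∑ t : Fin tf,
        ((∑ j, ∑ h, act (A j) (b j) (x0 j) tf (kk j) t * R i t j h *
            act (A h) (b h) (x0 h) tf (kk h) t) +
          M t * act (A i) (b i) (x0 i) tf (kk i) t)) -
      (∑ t : Fin tf,
        ((∑ j, ∑ h, act (A j) (b j) (x0 j) tf (kk j) t * R j t j h *
            act (A h) (b h) (x0 h) tf (kk h) t) +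
          M t * ∑ l, act (A l) (b l) (x0 l) tf (kk l) t)) =
      (∑ t : Fin tf,
        ((∑ j, ∑ h, act (A j) (b j) (x0 j) tf (k j) t * R i t j h *
            act (A h) (b h) (x0 h) tf (k h) t) +
          M t * act (A i) (b i) (x0 i) tf (k i) t)) -
      (∑ t : Fin tf,
        ((∑ j, ∑ h, act (A j) (b j) (x0 j) tf (k j) t * R j t j h *
            act (A h) (b h) (x0 h) tf (k h) t) +
          M t * ∑ l, act (A l) (b l) (x0 l) tf (k l) t)) := by
    intro kk hkk
    rw [← Finset.sum_sub_distrib, ← Finset.sum_sub_distrib]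
    refine Finset.sum_congr rfl fun t _ => ?_
    set u' : Fin N → ℝ := fun l => act (A l) (b l) (x0 l) tf (kk l) t with hu'
    set u : Fin N → ℝ := fun l => act (A l) (b l) (x0 l) tf (k l) t with hu
    have huj : ∀ l, l ≠ i → u' l = u l := by
      intro l hl
      simp only [hu', hu, hkk l hl]
    have hdouble : (∑ j, ∑ h, u' j * R i t j h * u' h) - (∑ j, ∑ h, u' j * R j t j h * u' h) =
        (∑ j, ∑ h, u j * R i t j h * u h) - (∑ j, ∑ h, u j * R j t j h * u h) := by
      rw [← Finset.sum_sub_distrib, ← Finset.sum_sub_distrib]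
      refine Finset.sum_congr rfl fun j _ => ?_
      rw [← Finset.sum_sub_distrib, ← Finset.sum_sub_distrib]
      refine Finset.sum_congr rfl fun h _ => ?_
      by_cases hj : j = i
      · subst hj; ring
      · by_cases hh : h = i
        · subst hh
          have hc : R h t j h = R j t j h := by
            rw [← (hRsymm h t).apply j h, hC2 h j (fun e => hj e.symm) t,
              (hRsymm j t).apply j h]
          rw [hc]; ring
        · rw [huj j hj, huj h hh]
    have hMpart : M t * u' i - M t * ∑ l, u' l = M t * u i - M t * ∑ l, u l := by
      have hrest : ∑ l ∈ Finset.univ.erase i, u' l = ∑ l ∈ Finset.univ.erase i, u l :=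
        Finset.sum_congr rfl fun l hl => huj l (Finset.ne_of_mem_erase hl)
      have h1 : ∑ l ∈ Finset.univ.erase i, u' l + u' i = ∑ l, u' l :=
        Finset.sum_erase_add _ _ (Finset.mem_univ i)
      have h2 : ∑ l ∈ Finset.univ.erase i, u l + u i = ∑ l, u l :=
        Finset.sum_erase_add _ _ (Finset.mem_univ i)
      rw [← h1, ← h2, hrest]
      ring
    linarith
  have h1 := hQpart k' hkj
  have h2 := hRpart k' hkj
  linarith
end

section
/- Consider the decoupled LQ game with decoupled state feedback information structure satisfying conditions (C1) and (C2), with assembled potential Π. For every player i, the function k ↦ J^i(k) − Π(k) does not depend on k^i; that is, J^i(k^i, k^{-i}) − Π(k^i, k^{-i}) = J^i(k̂^i, k^{-i}) − Π(k̂^i, k^{-i}) for all k^i, k̂^i and all k^{-i}. -/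
open Matrix

/-!
STATEMENT 7: Under conditions (C1) and (C2), for each player `i` the difference
`Jⁱ − Π` (with `Π` the assembled potential) does not depend on player `i`'s own decision
variable `kⁱ`.
-/

lemma helperQuad {ι : Type*} [Fintype ι]
    (Qi Qhat : Matrix ι ι ℝ) (P : ι → Prop) [DecidablePred P]
    (v w : ι → ℝ)
    (hD : ∀ p q : ι, P p ∨ P q → Qi p q = Qhat p q)
    (hvw : ∀ p : ι, ¬ P p → v p = w p) :
    v ⬝ᵥ Qi.mulVec v - v ⬝ᵥ Qhat.mulVec v
      = w ⬝ᵥ Qi.mulVec w - w ⬝ᵥ Qhat.mulVec w := by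
  simp only [dotProduct, Matrix.mulVec]
  rw [← Finset.sum_sub_distrib, ← Finset.sum_sub_distrib]
  refine Finset.sum_congr rfl fun p _ => ?_
  by_cases hp : P p
  · have hz : ∀ u : ι → ℝ, (∑ q, Qi p q * u q) = ∑ q, Qhat p q * u q := fun u =>
      Finset.sum_congr rfl fun q _ => by rw [hD p q (Or.inl hp)]
    rw [hz v, hz w]
    simp
  · rw [hvw p hp, ← mul_sub, ← mul_sub, ← Finset.sum_sub_distrib,
      ← Finset.sum_sub_distrib]
    congr 1
    refine Finset.sum_congr rfl fun q _ => ?_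
    by_cases hq : P q
    · rw [hD p q (Or.inr hq)]; simp
    · rw [hvw q hq]

lemma helperR {N : ℕ} (i : Fin N) (Ri Rhat : Matrix (Fin N) (Fin N) ℝ)
    (u w : Fin N → ℝ)
    (hD : ∀ j h : Fin N, j = i ∨ h = i → Ri j h = Rhat j h)
    (huw : ∀ j, j ≠ i → u j = w j) (Mt : ℝ) :
    ((∑ j, ∑ h, u j * Ri j h * u h) + Mt * u i)
      - ((∑ j, ∑ h, u j * Rhat j h * u h) + Mt * ∑ j, u j)
    = ((∑ j, ∑ h, w j * Ri j h * w h) + Mt * w i)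
      - ((∑ j, ∑ h, w j * Rhat j h * w h) + Mt * ∑ j, w j) := by
  have hquad : (∑ j, ∑ h, u j * Ri j h * u h) - (∑ j, ∑ h, u j * Rhat j h * u h)
      = (∑ j, ∑ h, w j * Ri j h * w h) - (∑ j, ∑ h, w j * Rhat j h * w h) := by
    rw [← Finset.sum_sub_distrib, ← Finset.sum_sub_distrib]
    refine Finset.sum_congr rfl fun j _ => ?_
    rw [← Finset.sum_sub_distrib, ← Finset.sum_sub_distrib]
    refine Finset.sum_congr rfl fun h _ => ?_
    by_cases hj : j = i
    · rw [hD j h (Or.inl hj)]; ring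
    · by_cases hh : h = i
      · rw [hD j h (Or.inr hh)]; ring
      · rw [huw j hj, huw h hh]
  have hlin : Mt * u i - Mt * ∑ j, u j = Mt * w i - Mt * ∑ j, w j := by
    rw [← Finset.add_sum_erase _ u (Finset.mem_univ i),
        ← Finset.add_sum_erase _ w (Finset.mem_univ i)]
    have : ∑ j ∈ Finset.univ.erase i, u j = ∑ j ∈ Finset.univ.erase i, w j :=
      Finset.sum_congr rfl fun j hj => huw j (Finset.ne_of_mem_erase hj)
    rw [this]; ring
  linarith

theorem decoupled_lq_feedback_loss_sub_potential_dummy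
    (N tf : ℕ) (hN : 1 ≤ N) (htf : 1 ≤ tf)
    (n : Fin N → ℕ)
    (A : ∀ i, Matrix (Fin (n i)) (Fin (n i)) ℝ)
    (b : ∀ i, Fin (n i) → ℝ)
    (x0 : ∀ i, Fin (n i) → ℝ)
    (Q : Fin N → Fin (tf + 1) →
      Matrix ((j : Fin N) × Fin (n j)) ((j : Fin N) × Fin (n j)) ℝ)
    (hQ : ∀ i t, (Q i t).PosSemidef)
    (R : Fin N → Fin tf → Matrix (Fin N) (Fin N) ℝ)
    (hRsymm : ∀ i t, (R i t).IsSymm)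
    (hRown : ∀ i t, 0 < R i t i i)
    (hRother : ∀ i t l, l ≠ i → 0 ≤ R i t l l)
    (M : Fin tf → ℝ) (hM : ∀ t, 0 ≤ M t)
    (d : Fin (tf + 1) → ((j : Fin N) × Fin (n j)) → ℝ)
    (hC1 : ∀ i j, i ≠ j → ∀ (t : Fin (tf + 1)) (a : Fin (n i)) (c : Fin (n j)),
      Q i t ⟨i, a⟩ ⟨j, c⟩ = Q j t ⟨i, a⟩ ⟨j, c⟩)
    (hC2 : ∀ i j, i ≠ j → ∀ t : Fin tf, R i t i j = R j t i j) :
    ∀ (i : Fin N) (k : ∀ j, Fin tf → Fin (n j) → ℝ) (ki' : Fin tf → Fin (n i) → ℝ),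
      lossJ N tf n A b x0 Q R M d i (Function.update k i ki') -
          potentialFn N tf n A b x0 Q R M d (Function.update k i ki') =
        lossJ N tf n A b x0 Q R M d i k -
          potentialFn N tf n A b x0 Q R M d k := by
  intro i k ki'
  have hkk : ∀ j, j ≠ i → Function.update k i ki' j = k j :=
    fun j hj => Function.update_of_ne hj _ _
  unfold lossJ potentialFn
  have key : ∀ S S' T T' U U' V V' : ℝ, S - T = S' - T' → U - V = U' - V' →
      (S + U) - (T + V) = (S' + U') - (T' + V') := by intros; linarith
  apply key
  · rw [← Finset.sum_sub_distrib, ← Finset.sum_sub_distrib]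
    refine Finset.sum_congr rfl fun t _ => ?_
    refine helperQuad _ _ (fun p : (j : Fin N) × Fin (n j) => p.1 = i) _ _ ?_ ?_
    · rintro ⟨pj, pa⟩ ⟨qj, qa⟩ (hp | hq)
      · dsimp at hp; subst hp; rfl
      · dsimp at hq; subst hq
        by_cases hpi : pj = qj
        · subst hpi; rfl
        · exact (hC1 pj qj hpi t pa qa).symm
    · rintro ⟨pj, pa⟩ hp
      dsimp at hp ⊢
      rw [hkk pj hp]
  · rw [← Finset.sum_sub_distrib, ← Finset.sum_sub_distrib]
    refine Finset.sum_congr rfl fun t _ => ?_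
    refine helperR i _ _ _ _ ?_ ?_ (M t)
    · rintro j h (hj | hh)
      · rw [hj]
      · rw [hh]
        by_cases hji : j = i
        · rw [hji]
        · calc R i t j i = R i t i j := ((hRsymm i t).apply j i).symm
            _ = R j t i j := hC2 i j (Ne.symm hji) t
            _ = R j t j i := ((hRsymm j t).apply i j).symm
    · intro j hj
      unfold act
      rw [hkk j hj]
end

section
/- Consider the decoupled LQ game with decoupled state feedback information structure satisfying conditions (C1) and (C2), with assembled potential Π. If k* = (k^{1*},…,k^{N*}) is a global minimizer of Π over all k ∈ ∏_i ℝ^{t_f n^i}, then k* is a Nash equilibrium of the game: for every player i and every k̂^i ∈ ℝ^{t_f n^i}, J^i(k^{i*}, k^{-i*}) ≤ J^i(k̂^i, k^{-i*}). In particular, if Π attains its global minimum, the game has at least one Nash equilibrium. -/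
open Matrix

/-!
STATEMENT 8: Under conditions (C1) and (C2), any global minimizer `k*` of the assembled
potential `Π` is a Nash equilibrium of the decoupled LQ game; in particular, if `Π`
attains its global minimum then the game has at least one Nash equilibrium.
-/

/-- Quadratic-form exchange lemma (scalar double-sum form): if `D` and `P` differ only on
pairs of indices where `v` and `w` agree, then the difference of the `P`-quadratic forms
equals that of the `D`-quadratic forms. -/
lemma quad_shift {ι : Type*} [Fintype ι] (P D : ι → ι → ℝ) (v w : ι → ℝ)
    (h : ∀ p q, D p q ≠ P p q → v p = w p ∧ v q = w q) :
    (∑ p, ∑ q, v p * P p q * v q) + (∑ p, ∑ q, w p * D p q * w q)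
      = (∑ p, ∑ q, w p * P p q * w q) + (∑ p, ∑ q, v p * D p q * v q) := by
  rw [← Finset.sum_add_distrib, ← Finset.sum_add_distrib]
  refine Finset.sum_congr rfl fun p _ => ?_
  rw [← Finset.sum_add_distrib, ← Finset.sum_add_distrib]
  refine Finset.sum_congr rfl fun q _ => ?_
  by_cases hd : D p q = P p q
  · rw [hd]; ring
  · obtain ⟨h1, h2⟩ := h p q hd; rw [h1, h2]

/-- Matrix version of `quad_shift`. -/
lemma quad_shift' {ι : Type*} [Fintype ι] (P D : Matrix ι ι ℝ) (v w : ι → ℝ)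
    (h : ∀ p q, D p q ≠ P p q → v p = w p ∧ v q = w q) :
    v ⬝ᵥ P.mulVec v + w ⬝ᵥ D.mulVec w = w ⬝ᵥ P.mulVec w + v ⬝ᵥ D.mulVec v := by
  simp only [dotProduct, Matrix.mulVec, Finset.mul_sum, ← mul_assoc]
  exact quad_shift (fun p q => P p q) (fun p q => D p q) v w h

theorem decoupled_lq_feedback_potential_minimizer_is_NE
    (N tf : ℕ) (hN : 1 ≤ N) (htf : 1 ≤ tf)
    (n : Fin N → ℕ)
    (A : ∀ i, Matrix (Fin (n i)) (Fin (n i)) ℝ)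
    (b : ∀ i, Fin (n i) → ℝ)
    (x0 : ∀ i, Fin (n i) → ℝ)
    (Q : Fin N → Fin (tf + 1) →
      Matrix ((j : Fin N) × Fin (n j)) ((j : Fin N) × Fin (n j)) ℝ)
    (hQ : ∀ i t, (Q i t).PosSemidef)
    (R : Fin N → Fin tf → Matrix (Fin N) (Fin N) ℝ)
    (hRsymm : ∀ i t, (R i t).IsSymm)
    (hRown : ∀ i t, 0 < R i t i i)
    (hRother : ∀ i t l, l ≠ i → 0 ≤ R i t l l)
    (M : Fin tf → ℝ) (hM : ∀ t, 0 ≤ M t)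
    (d : Fin (tf + 1) → ((j : Fin N) × Fin (n j)) → ℝ)
    (hC1 : ∀ i j, i ≠ j → ∀ (t : Fin (tf + 1)) (a : Fin (n i)) (c : Fin (n j)),
      Q i t ⟨i, a⟩ ⟨j, c⟩ = Q j t ⟨i, a⟩ ⟨j, c⟩)
    (hC2 : ∀ i j, i ≠ j → ∀ t : Fin tf, R i t i j = R j t i j)
    (kstar : ∀ j, Fin tf → Fin (n j) → ℝ)
    (hmin : ∀ k : ∀ j, Fin tf → Fin (n j) → ℝ,
      potentialFn N tf n A b x0 Q R M d kstar ≤ potentialFn N tf n A b x0 Q R M d k) :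
    ∀ (i : Fin N) (ki' : Fin tf → Fin (n i) → ℝ),
      lossJ N tf n A b x0 Q R M d i kstar ≤
        lossJ N tf n A b x0 Q R M d i (Function.update kstar i ki') := by
  intro i ki'
  set k' := Function.update kstar i ki' with hk'
  have hkj : ∀ j, j ≠ i → k' j = kstar j := fun j hj => Function.update_of_ne hj _ _
  -- trajectories of other players are unchanged
  have hy : ∀ (j : Fin N), j ≠ i → ∀ tn : ℕ,
      traj (A j) (b j) (x0 j) tf (k' j) tn = traj (A j) (b j) (x0 j) tf (kstar j) tn := by
    intro j hj tn; rw [hkj j hj]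
  have hu : ∀ (j : Fin N), j ≠ i → ∀ t : Fin tf,
      act (A j) (b j) (x0 j) tf (k' j) t = act (A j) (b j) (x0 j) tf (kstar j) t := by
    intro j hj t; rw [hkj j hj]
  -- key exchange for the state-cost terms
  have keyQ : ∀ t : Fin (tf + 1),
      ((fun p : (j : Fin N) × Fin (n j) =>
          traj (A p.1) (b p.1) (x0 p.1) tf (k' p.1) (t : ℕ) p.2 - d t p) ⬝ᵥ
        (Q i t).mulVec (fun p : (j : Fin N) × Fin (n j) =>
          traj (A p.1) (b p.1) (x0 p.1) tf (k' p.1) (t : ℕ) p.2 - d t p)) +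
      ((fun p : (j : Fin N) × Fin (n j) =>
          traj (A p.1) (b p.1) (x0 p.1) tf (kstar p.1) (t : ℕ) p.2 - d t p) ⬝ᵥ
        (Matrix.of fun p q : (j : Fin N) × Fin (n j) => Q p.1 t p q).mulVec
          (fun p : (j : Fin N) × Fin (n j) =>
            traj (A p.1) (b p.1) (x0 p.1) tf (kstar p.1) (t : ℕ) p.2 - d t p))
      =
      ((fun p : (j : Fin N) × Fin (n j) =>
          traj (A p.1) (b p.1) (x0 p.1) tf (kstar p.1) (t : ℕ) p.2 - d t p) ⬝ᵥ
        (Q i t).mulVec (fun p : (j : Fin N) × Fin (n j) =>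
          traj (A p.1) (b p.1) (x0 p.1) tf (kstar p.1) (t : ℕ) p.2 - d t p)) +
      ((fun p : (j : Fin N) × Fin (n j) =>
          traj (A p.1) (b p.1) (x0 p.1) tf (k' p.1) (t : ℕ) p.2 - d t p) ⬝ᵥ
        (Matrix.of fun p q : (j : Fin N) × Fin (n j) => Q p.1 t p q).mulVec
          (fun p : (j : Fin N) × Fin (n j) =>
            traj (A p.1) (b p.1) (x0 p.1) tf (k' p.1) (t : ℕ) p.2 - d t p)) := by
    intro t
    apply quad_shift'
    intro p q hne
    simp only [Matrix.of_apply] at hne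
    have hp : p.1 ≠ i := by
      intro hpi
      apply hne
      obtain ⟨p1, p2⟩ := p
      simp only at hpi
      subst hpi
      rfl
    have hq : q.1 ≠ i := by
      intro hqi
      apply hne
      obtain ⟨q1, q2⟩ := q
      simp only at hqi
      subst hqi
      obtain ⟨p1, p2⟩ := p
      exact hC1 p1 q1 hp t p2 q2
    constructor
    · simp only [hy p.1 hp]
    · simp only [hy q.1 hq]
  -- key exchange for the control-cost terms
  have keyR : ∀ t : Fin tf,
      ((∑ j, ∑ h, act (A j) (b j) (x0 j) tf (k' j) t * R i t j h *
          act (A h) (b h) (x0 h) tf (k' h) t) +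
        M t * act (A i) (b i) (x0 i) tf (k' i) t) +
      ((∑ j, ∑ h, act (A j) (b j) (x0 j) tf (kstar j) t * R j t j h *
          act (A h) (b h) (x0 h) tf (kstar h) t) +
        M t * ∑ j, act (A j) (b j) (x0 j) tf (kstar j) t)
      =
      ((∑ j, ∑ h, act (A j) (b j) (x0 j) tf (kstar j) t * R i t j h *
          act (A h) (b h) (x0 h) tf (kstar h) t) +
        M t * act (A i) (b i) (x0 i) tf (kstar i) t) +
      ((∑ j, ∑ h, act (A j) (b j) (x0 j) tf (k' j) t * R j t j h *
          act (A h) (b h) (x0 h) tf (k' h) t) +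
        M t * ∑ j, act (A j) (b j) (x0 j) tf (k' j) t) := by
    intro t
    have E1 := quad_shift (fun j h => R i t j h) (fun j h => R j t j h)
      (fun j => act (A j) (b j) (x0 j) tf (k' j) t)
      (fun j => act (A j) (b j) (x0 j) tf (kstar j) t) ?_
    · have E2 : (∑ j, act (A j) (b j) (x0 j) tf (k' j) t) -
          (∑ j, act (A j) (b j) (x0 j) tf (kstar j) t) =
          act (A i) (b i) (x0 i) tf (k' i) t - act (A i) (b i) (x0 i) tf (kstar i) t := by
        rw [← Finset.sum_sub_distrib]
        rw [Finset.sum_eq_single i (fun j _ hj => by rw [hu j hj]; ring) (by simp)]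
      linear_combination E1 - M t * E2
    · intro j h hne
      have hj : j ≠ i := by
        intro hji; exact hne (by rw [hji])
      have hh : h ≠ i := by
        intro hhi; subst hhi; exact hne (hC2 j h hj t)
      exact ⟨hu j hj t, hu h hh t⟩
  have key : lossJ N tf n A b x0 Q R M d i k' + potentialFn N tf n A b x0 Q R M d kstar
      = lossJ N tf n A b x0 Q R M d i kstar + potentialFn N tf n A b x0 Q R M d k' := by
    simp only [lossJ, potentialFn]
    have hQsum := Finset.sum_congr
      (rfl : (Finset.univ : Finset (Fin (tf + 1))) = Finset.univ) (fun t _ => keyQ t)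
    have hRsum := Finset.sum_congr
      (rfl : (Finset.univ : Finset (Fin tf)) = Finset.univ) (fun t _ => keyR t)
    simp only [Finset.sum_add_distrib] at hQsum hRsum ⊢
    linarith [hQsum, hRsum]
  have := hmin k'
  linarith
end

section
/- Let f : ℝ^M → ℝ be continuously differentiable, bounded below, and with L-Lipschitz gradient for some L > 0, and let Λ ∈ ℝ^{M×M} be symmetric positive definite. Fix 0 < c₁ < c₂ < 1 and consider iterates k(m+1) = k(m) − η(m) Λ ∇f(k(m)) starting from any k(0), where at each m either ∇f(k(m)) = 0, or η(m) > 0 satisfies the Wolfe conditions at k(m) for the descent direction p(m) = −Λ∇f(k(m)). Then ∇f(k(m)) → 0 as m → ∞. -/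
/-!
STATEMENT 11: For `f : ℝ^M → ℝ` continuously differentiable, bounded below, with
`L`-Lipschitz gradient, and `Λ` symmetric positive definite, the preconditioned gradient
iteration `k(m+1) = k(m) − η(m) Λ ∇f(k(m))`, where at each step either `∇f(k(m)) = 0` or
`η(m) > 0` satisfies the Wolfe conditions for the descent direction `p(m) = −Λ∇f(k(m))`,
yields `∇f(k(m)) → 0`.
-/

open scoped RealInnerProductSpace
open Matrix

lemma aux_inner_pos (M : ℕ) (Λ : Matrix (Fin M) (Fin M) ℝ) (hΛ : Λ.PosDef)
    (x : EuclideanSpace ℝ (Fin M)) (hx : x ≠ 0) :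
    0 < ⟪x, Matrix.toEuclideanLin Λ x⟫ := by
  have h2 := hΛ.dotProduct_mulVec_pos (x := WithLp.equiv _ _ x) (by simpa using hx)
  have : ⟪x, Matrix.toEuclideanLin Λ x⟫
      = dotProduct (star (WithLp.equiv _ _ x)) (Λ *ᵥ (WithLp.equiv _ _ x)) := by
    rw [EuclideanSpace.inner_eq_star_dotProduct, Matrix.toEuclideanLin_apply]
    simp [dotProduct_comm]
  rw [this]; exact h2

lemma aux_coercive (M : ℕ) (Λ : Matrix (Fin M) (Fin M) ℝ) (hΛ : Λ.PosDef) :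
    ∃ μ > 0, ∀ x : EuclideanSpace ℝ (Fin M),
      μ * ‖x‖ ^ 2 ≤ ⟪x, Matrix.toEuclideanLin Λ x⟫ := by
  rcases Nat.eq_zero_or_pos M with hM | hM
  · refine ⟨1, one_pos, fun x => ?_⟩
    subst hM
    have hx : x = 0 := by ext i; exact i.elim0
    simp [hx]
  · haveI : Nonempty (Fin M) := Fin.pos_iff_nonempty.mp hM
    haveI : Nontrivial (EuclideanSpace ℝ (Fin M)) := by infer_instance
    set T : EuclideanSpace ℝ (Fin M) →L[ℝ] EuclideanSpace ℝ (Fin M) :=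
      LinearMap.toContinuousLinearMap (Matrix.toEuclideanLin Λ)
    have hTeq : ∀ x, T x = Matrix.toEuclideanLin Λ x := fun x => rfl
    have hcont : Continuous fun x : EuclideanSpace ℝ (Fin M) => ⟪x, T x⟫ :=
      continuous_id.inner T.continuous
    have hne : (Metric.sphere (0 : EuclideanSpace ℝ (Fin M)) 1).Nonempty :=
      NormedSpace.sphere_nonempty.mpr zero_le_one
    obtain ⟨x₀, hx₀, hmin'⟩ := (isCompact_sphere (0 : EuclideanSpace ℝ (Fin M)) 1).exists_isMinOn
      hne hcont.continuousOn
    have hmin : ∀ y ∈ Metric.sphere (0 : EuclideanSpace ℝ (Fin M)) 1, ⟪x₀, T x₀⟫ ≤ ⟪y, T y⟫ :=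
      fun y hy => hmin' hy
    have hx₀norm : ‖x₀‖ = 1 := by simpa using hx₀
    have hx₀ne : x₀ ≠ 0 := by
      intro h; rw [h] at hx₀norm; simp at hx₀norm
    refine ⟨⟪x₀, T x₀⟫, by rw [hTeq]; exact aux_inner_pos M Λ hΛ x₀ hx₀ne, fun x => ?_⟩
    rcases eq_or_ne x 0 with rfl | hx
    · simp
    · have hxn : (0:ℝ) < ‖x‖ := norm_pos_iff.mpr hx
      set u : EuclideanSpace ℝ (Fin M) := ‖x‖⁻¹ • x
      have hu : ‖u‖ = 1 := by
        simp [u, norm_smul, abs_of_nonneg (le_of_lt (inv_pos.mpr hxn)), inv_mul_cancel₀ hxn.ne']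
      have hxu : x = ‖x‖ • u := by
        rw [smul_smul, mul_inv_cancel₀ hxn.ne', one_smul]
      have hmin' := hmin u (by simpa using hu)
      calc ⟪x₀, T x₀⟫ * ‖x‖ ^ 2 ≤ ⟪u, T u⟫ * ‖x‖ ^ 2 := by nlinarith
        _ = ⟪x, Matrix.toEuclideanLin Λ x⟫ := by
            rw [← hTeq]
            simp only [u, T.map_smul, real_inner_smul_left, real_inner_smul_right]
            field_simp

set_option maxHeartbeats 1000000 in
theorem gradient_descent_wolfe_gradient_tendsto_zero
    (M : ℕ) (f : EuclideanSpace ℝ (Fin M) → ℝ)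
    (hf : ContDiff ℝ 1 f)
    (hbdd : BddBelow (Set.range f))
    (L : ℝ) (hL : 0 < L)
    (hLip : ∀ x y : EuclideanSpace ℝ (Fin M),
      ‖gradient f x - gradient f y‖ ≤ L * ‖x - y‖)
    (Λ : Matrix (Fin M) (Fin M) ℝ) (hΛ : Λ.PosDef)
    (c1 c2 : ℝ) (hc1 : 0 < c1) (hc12 : c1 < c2) (hc2 : c2 < 1)
    (k : ℕ → EuclideanSpace ℝ (Fin M)) (η : ℕ → ℝ)
    (hiter : ∀ m, k (m + 1) =
      k m - η m • Matrix.toEuclideanLin Λ (gradient f (k m)))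
    (hwolfe : ∀ m, gradient f (k m) = 0 ∨
      (0 < η m ∧
        f (k m + η m • (-(Matrix.toEuclideanLin Λ (gradient f (k m))))) ≤
          f (k m) +
            c1 * η m * ⟪gradient f (k m), -(Matrix.toEuclideanLin Λ (gradient f (k m)))⟫ ∧
        ⟪gradient f (k m + η m • (-(Matrix.toEuclideanLin Λ (gradient f (k m))))),
            -(Matrix.toEuclideanLin Λ (gradient f (k m)))⟫ ≥
          c2 * ⟪gradient f (k m), -(Matrix.toEuclideanLin Λ (gradient f (k m)))⟫)) :
    Filter.Tendsto (fun m => gradient f (k m)) Filter.atTop (nhds 0) := by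
  classical
  obtain ⟨μ, hμ, hcoer⟩ := aux_coercive M Λ hΛ
  set T : EuclideanSpace ℝ (Fin M) →L[ℝ] EuclideanSpace ℝ (Fin M) :=
    LinearMap.toContinuousLinearMap (Matrix.toEuclideanLin Λ) with hT
  set C : ℝ := max ‖T‖ 1 with hCdef
  have hC1 : (1:ℝ) ≤ C := le_max_right _ _
  have hC0 : (0:ℝ) < C := lt_of_lt_of_le one_pos hC1
  have hTle : ∀ x, ‖Matrix.toEuclideanLin Λ x‖ ≤ C * ‖x‖ := fun x =>
    (T.le_opNorm x).trans (mul_le_mul_of_nonneg_right (le_max_left _ _) (norm_nonneg x))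
  have h1c2 : (0:ℝ) < 1 - c2 := by linarith
  set g : ℕ → EuclideanSpace ℝ (Fin M) := fun m => gradient f (k m) with hg
  set δ : ℝ := c1 * (1 - c2) * μ ^ 2 / (L * C ^ 2) with hδ
  have hδ0 : 0 < δ :=
    div_pos (mul_pos (mul_pos hc1 h1c2) (pow_pos hμ 2)) (mul_pos hL (pow_pos hC0 2))
  have key : ∀ m, f (k (m + 1)) + δ * ‖g m‖ ^ 2 ≤ f (k m) := by
    intro m
    have hzero : g m = 0 → f (k (m + 1)) + δ * ‖g m‖ ^ 2 ≤ f (k m) := by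
      intro h0
      have hk : k (m + 1) = k m := by
        rw [hiter m]
        simp only [hg] at h0
        rw [h0]
        simp
      rw [hk, h0]
      simp
    rcases hwolfe m with h0 | ⟨hη, harmijo, hcurv⟩
    · exact hzero h0
    · rcases eq_or_ne (g m) 0 with h0 | h0
      · exact hzero h0
      · set p : EuclideanSpace ℝ (Fin M) := -(Matrix.toEuclideanLin Λ (g m)) with hp
        set a : ℝ := ⟪g m, Matrix.toEuclideanLin Λ (g m)⟫ with ha
        have hgp : ⟪g m, p⟫ = -a := by rw [hp, inner_neg_right]
        have hag : μ * ‖g m‖ ^ 2 ≤ a := hcoer _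
        have ha0 : 0 < a := by
          have : (0:ℝ) < μ * ‖g m‖ ^ 2 := by
            have := norm_pos_iff.mpr h0
            positivity
          linarith
        have hp0 : p ≠ 0 := by
          intro h
          have : a = 0 := by
            rw [ha]
            have : Matrix.toEuclideanLin Λ (g m) = 0 := by
              have := congrArg Neg.neg h; simpa [hp] using this
            rw [this, inner_zero_right]
          linarith
        have hppos : (0:ℝ) < ‖p‖ := norm_pos_iff.mpr hp0
        have hpnorm : ‖p‖ ≤ C * ‖g m‖ := by rw [hp, norm_neg]; exact hTle _
        have hstep : k (m + 1) = k m + η m • p := by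
          rw [hiter m, sub_eq_add_neg, ← smul_neg]
        -- curvature + Lipschitz gives a lower bound on η m
        have hcurv2 : ⟪gradient f (k m + η m • p) - g m, p⟫ ≥ (1 - c2) * a := by
          rw [inner_sub_left]
          have := hcurv
          rw [hgp] at *
          nlinarith [hcurv, hgp]
        have hlip2 : ⟪gradient f (k m + η m • p) - g m, p⟫ ≤ L * η m * ‖p‖ ^ 2 := by
          have h1 := real_inner_le_norm (gradient f (k m + η m • p) - g m) p
          have h2 := hLip (k m + η m • p) (k m)
          have h3 : ‖k m + η m • p - k m‖ = η m * ‖p‖ := by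
            rw [add_sub_cancel_left, norm_smul, Real.norm_eq_abs, abs_of_pos hη]
          rw [h3] at h2
          have := mul_le_mul_of_nonneg_right h2 (norm_nonneg p)
          nlinarith [norm_nonneg p, norm_nonneg (gradient f (k m + η m • p) - g m)]
        have hηbound : (1 - c2) * a ≤ L * η m * ‖p‖ ^ 2 := le_trans hcurv2 hlip2
        -- Armijo
        have harmijo' : f (k (m + 1)) ≤ f (k m) - c1 * η m * a := by
          rw [hstep]
          calc f (k m + η m • p) ≤ f (k m) + c1 * η m * ⟪g m, p⟫ := harmijo
            _ = f (k m) - c1 * η m * a := by rw [hgp]; ring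
        -- combine
        have hfinal : δ * ‖g m‖ ^ 2 ≤ c1 * η m * a := by
          have hη' : (1 - c2) * a / (L * ‖p‖ ^ 2) ≤ η m := by
            rw [div_le_iff₀ (by positivity)]
            linarith [hηbound]
          have step1 : c1 * ((1 - c2) * a / (L * ‖p‖ ^ 2)) * a ≤ c1 * η m * a := by
            have := mul_le_mul_of_nonneg_right
              (mul_le_mul_of_nonneg_left hη' (le_of_lt hc1)) (le_of_lt ha0)
            linarith
          refine le_trans ?_ step1
          have heq : c1 * ((1 - c2) * a / (L * ‖p‖ ^ 2)) * a
              = c1 * (1 - c2) * a ^ 2 / (L * ‖p‖ ^ 2) := by ring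
          rw [heq, le_div_iff₀ (by positivity)]
          have hδL : δ * (L * C ^ 2) = c1 * (1 - c2) * μ ^ 2 := by
            rw [hδ]; field_simp
          have hp2 : ‖p‖ ^ 2 ≤ C ^ 2 * ‖g m‖ ^ 2 := by
            nlinarith [hpnorm, norm_nonneg p, norm_nonneg (g m), hC0]
          have ha2 : μ ^ 2 * ‖g m‖ ^ 4 ≤ a ^ 2 := by
            have h := mul_le_mul hag hag (by positivity) ha0.le
            nlinarith [h]
          have t1 : δ * ‖g m‖ ^ 2 * (L * ‖p‖ ^ 2)
              ≤ δ * ‖g m‖ ^ 2 * (L * (C ^ 2 * ‖g m‖ ^ 2)) :=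
            mul_le_mul_of_nonneg_left
              (mul_le_mul_of_nonneg_left hp2 hL.le)
              (mul_nonneg hδ0.le (sq_nonneg _))
          have t2 : δ * ‖g m‖ ^ 2 * (L * (C ^ 2 * ‖g m‖ ^ 2))
              = c1 * (1 - c2) * μ ^ 2 * ‖g m‖ ^ 4 := by
            rw [← hδL]; ring
          have t3 : c1 * (1 - c2) * μ ^ 2 * ‖g m‖ ^ 4 ≤ c1 * (1 - c2) * a ^ 2 := by
            have := mul_le_mul_of_nonneg_left ha2
              (mul_nonneg (mul_nonneg hc1.le h1c2.le) (by positivity : (0:ℝ) ≤ 1))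
            nlinarith [ha2, mul_pos hc1 h1c2]
          linarith
        linarith
  -- telescoping
  have hsum : ∀ n, f (k n) + δ * ∑ m ∈ Finset.range n, ‖g m‖ ^ 2 ≤ f (k 0) := by
    intro n
    induction n with
    | zero => simp
    | succ n ih =>
      have := key n
      rw [Finset.sum_range_succ]
      nlinarith [this, ih]
  obtain ⟨B, hB⟩ := hbdd
  have hBle : ∀ n, B ≤ f (k n) := fun n => hB ⟨k n, rfl⟩
  have hbound : ∀ n, ∑ m ∈ Finset.range n, ‖g m‖ ^ 2 ≤ (f (k 0) - B) / δ := by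
    intro n
    rw [le_div_iff₀ hδ0]
    nlinarith [hsum n, hBle n]
  have hsummable : Summable fun m => ‖g m‖ ^ 2 :=
    summable_of_sum_range_le (fun m => sq_nonneg _) hbound
  have h1 : Filter.Tendsto (fun m => ‖g m‖ ^ 2) Filter.atTop (nhds 0) :=
    hsummable.tendsto_atTop_zero
  have h2 : Filter.Tendsto (fun m => ‖g m‖) Filter.atTop (nhds 0) := by
    have h3 := (Real.continuous_sqrt.tendsto 0).comp h1
    simp only [Function.comp_def, Real.sqrt_sq (norm_nonneg _), Real.sqrt_zero] at h3
    exact h3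
  exact tendsto_zero_iff_norm_tendsto_zero.mpr h2
end

section
/- Let f : ℝ^M → ℝ be continuously differentiable, coercive (f(k) → ∞ as ‖k‖ → ∞), with L-Lipschitz gradient for some L > 0, and suppose f has a unique critical point k* (i.e., ∇f(k) = 0 iff k = k*). Let Λ ∈ ℝ^{M×M} be symmetric positive definite and fix 0 < c₁ < c₂ < 1. Consider iterates k(m+1) = k(m) − η(m) Λ ∇f(k(m)) starting from any k(0), where at each m either ∇f(k(m)) = 0, or η(m) > 0 satisfies the Wolfe conditions at k(m) for the descent direction p(m) = −Λ∇f(k(m)). Then k(m) → k* as m → ∞, and k* is the unique global minimizer of f. -/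
/-!
STATEMENT 13: For `f : ℝ^M → ℝ` continuously differentiable, coercive, with `L`-Lipschitz
gradient and a unique critical point `k*`, and `Λ` symmetric positive definite, the
preconditioned gradient iteration `k(m+1) = k(m) − η(m) Λ ∇f(k(m))` with Wolfe stepsizes
(whenever `∇f(k(m)) ≠ 0`) converges to `k*`, and `k*` is the unique global minimizer of `f`.
-/

open scoped RealInnerProductSpace

set_option maxHeartbeats 1000000 in
theorem gradient_descent_wolfe_converges_to_unique_critical_point
    (M : ℕ) (f : EuclideanSpace ℝ (Fin M) → ℝ)
    (hf : ContDiff ℝ 1 f)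
    (hcoercive : Filter.Tendsto f (Bornology.cobounded (EuclideanSpace ℝ (Fin M)))
      Filter.atTop)
    (L : ℝ) (hL : 0 < L)
    (hLip : ∀ x y : EuclideanSpace ℝ (Fin M),
      ‖gradient f x - gradient f y‖ ≤ L * ‖x - y‖)
    (kstar : EuclideanSpace ℝ (Fin M))
    (hcrit : ∀ x, gradient f x = 0 ↔ x = kstar)
    (Λ : Matrix (Fin M) (Fin M) ℝ) (hΛ : Λ.PosDef)
    (c1 c2 : ℝ) (hc1 : 0 < c1) (hc12 : c1 < c2) (hc2 : c2 < 1)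
    (k : ℕ → EuclideanSpace ℝ (Fin M)) (η : ℕ → ℝ)
    (hiter : ∀ m, k (m + 1) =
      k m - η m • Matrix.toEuclideanLin Λ (gradient f (k m)))
    (hwolfe : ∀ m, gradient f (k m) = 0 ∨
      (0 < η m ∧
        f (k m + η m • (-(Matrix.toEuclideanLin Λ (gradient f (k m))))) ≤
          f (k m) +
            c1 * η m * ⟪gradient f (k m), -(Matrix.toEuclideanLin Λ (gradient f (k m)))⟫ ∧
        ⟪gradient f (k m + η m • (-(Matrix.toEuclideanLin Λ (gradient f (k m))))),
            -(Matrix.toEuclideanLin Λ (gradient f (k m)))⟫ ≥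
          c2 * ⟪gradient f (k m), -(Matrix.toEuclideanLin Λ (gradient f (k m)))⟫)) :
    Filter.Tendsto k Filter.atTop (nhds kstar) ∧
      (∀ x, f kstar ≤ f x) ∧
      (∀ y, (∀ x, f y ≤ f x) → y = kstar) := by
  have hcont : Continuous f := hf.continuous
  have hgradcont : Continuous (gradient f) :=
    ((InnerProductSpace.toDual ℝ _).symm.continuous).comp (hf.continuous_fderiv one_ne_zero)
  -- the global minimum part
  have hglobalmin : ∀ x, f kstar ≤ f x := by
    have hmin : ∃ x, ∀ y, f x ≤ f y := by
      have : Nonempty (EuclideanSpace ℝ (Fin M)) := ⟨kstar⟩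
      exact hcont.exists_forall_le (by rwa [← Metric.cobounded_eq_cocompact])
    obtain ⟨x₀, hx₀⟩ := hmin
    have hloc : IsLocalMin f x₀ := Filter.Eventually.of_forall hx₀
    have hg : gradient f x₀ = 0 := by simp [gradient, hloc.fderiv_eq_zero]
    have := (hcrit x₀).mp hg
    intro x; rw [← this]; exact hx₀ x
  have huniq : ∀ y, (∀ x, f y ≤ f x) → y = kstar := by
    intro y hy
    have hloc : IsLocalMin f y := Filter.Eventually.of_forall hy
    exact (hcrit y).mp (by simp [gradient, hloc.fderiv_eq_zero])
  refine ⟨?_, hglobalmin, huniq⟩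
  -- convergence
  rcases subsingleton_or_nontrivial (EuclideanSpace ℝ (Fin M)) with hss | hnt
  · have hk : ∀ m, k m = kstar := fun m => Subsingleton.elim _ _
    simpa [funext hk] using (tendsto_const_nhds :
      Filter.Tendsto (fun _ : ℕ => kstar) Filter.atTop (nhds kstar))
  -- nontrivial case
  set T := LinearMap.toContinuousLinearMap (Matrix.toEuclideanLin Λ) with hT
  have hTapp : ∀ x, T x = Matrix.toEuclideanLin Λ x := fun x => rfl
  -- smallest eigenvalue bound
  have hmu : ∃ μ > 0, ∀ x : EuclideanSpace ℝ (Fin M),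
      μ * ‖x‖ ^ 2 ≤ ⟪x, Matrix.toEuclideanLin Λ x⟫ := by
    have hq : Continuous fun x : EuclideanSpace ℝ (Fin M) => ⟪x, T x⟫ :=
      continuous_id.inner T.continuous
    have hqpos : ∀ x : EuclideanSpace ℝ (Fin M), x ≠ 0 → 0 < ⟪x, T x⟫ := by
      intro x hx
      have := hΛ.dotProduct_mulVec_pos (x := WithLp.ofLp x) (by simpa using hx)
      rw [hTapp, EuclideanSpace.inner_eq_star_dotProduct, Matrix.toEuclideanLin_apply,
        WithLp.ofLp_toLp, dotProduct_comm]
      simpa using this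
    have hsph : IsCompact (Metric.sphere (0 : EuclideanSpace ℝ (Fin M)) 1) :=
      isCompact_sphere 0 1
    have hne : (Metric.sphere (0 : EuclideanSpace ℝ (Fin M)) 1).Nonempty :=
      NormedSpace.sphere_nonempty.mpr (by norm_num)
    obtain ⟨u, hu, humin⟩ := hsph.exists_isMinOn hne hq.continuousOn
    have hunorm : ‖u‖ = 1 := by simpa using hu
    have hu0 : u ≠ 0 := by intro h; rw [h] at hunorm; simp at hunorm
    refine ⟨⟪u, T u⟫, hqpos u hu0, ?_⟩
    intro x
    rcases eq_or_ne x 0 with rfl | hx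
    · simp
    · have hxn : (0:ℝ) < ‖x‖ := norm_pos_iff.mpr hx
      set v : EuclideanSpace ℝ (Fin M) := ‖x‖⁻¹ • x with hv
      have hvs : v ∈ Metric.sphere (0 : EuclideanSpace ℝ (Fin M)) 1 := by
        simp [hv, norm_smul, abs_of_pos (inv_pos.mpr hxn), inv_mul_cancel₀ hxn.ne']
      have hs : ⟪v, T v⟫ = ‖x‖⁻¹ * ‖x‖⁻¹ * ⟪x, T x⟫ := by
        rw [hv, map_smul, real_inner_smul_left, real_inner_smul_right]; ring
      have h2 := humin hvs
      have h3 : ⟪u, T u⟫ * ‖x‖ ^ 2 ≤ ⟪v, T v⟫ * ‖x‖ ^ 2 :=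
        mul_le_mul_of_nonneg_right h2 (by positivity)
      calc ⟪u, T u⟫ * ‖x‖ ^ 2 ≤ ⟪v, T v⟫ * ‖x‖ ^ 2 := h3
        _ = ⟪x, T x⟫ := by rw [hs, pow_two]; field_simp
  obtain ⟨μ, hμ, hμle⟩ := hmu
  set K := max ‖T‖ 1 with hKdef
  have hK : (0:ℝ) < K := lt_of_lt_of_le one_pos (le_max_right _ _)
  have hKb : ∀ x, ‖Matrix.toEuclideanLin Λ x‖ ≤ K * ‖x‖ := fun x =>
    (T.le_opNorm x).trans (mul_le_mul_of_nonneg_right (le_max_left _ _) (norm_nonneg x))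
  have hc2' : (0:ℝ) < 1 - c2 := by linarith
  set C := c1 * (1 - c2) * μ ^ 2 / (L * K ^ 2) with hCdef
  have hC : 0 < C := by positivity
  set g := fun m => gradient f (k m) with hgdef
  -- per-step decrease
  have hdec : ∀ m, f (k (m + 1)) + C * ‖g m‖ ^ 2 ≤ f (k m) := by
    intro m
    rcases eq_or_ne (g m) 0 with hg0 | hg0
    · have : k (m + 1) = k m := by
        rw [hiter m]; rw [show gradient f (k m) = 0 from hg0]; simp
      rw [this, hg0]; simp
    rcases hwolfe m with h0 | ⟨hηpos, hW1, hW2⟩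
    · exact absurd h0 hg0
    set gm := gradient f (k m) with hgm
    set v := Matrix.toEuclideanLin Λ gm with hvdef
    set a := ⟪gm, v⟫ with hadef
    have hgmn : (0:ℝ) < ‖gm‖ := norm_pos_iff.mpr hg0
    have ha1 : μ * ‖gm‖ ^ 2 ≤ a := hμle gm
    have ha : 0 < a := lt_of_lt_of_le (by positivity) ha1
    have hvK : ‖v‖ ≤ K * ‖gm‖ := hKb gm
    have hv0 : v ≠ 0 := by
      intro h
      rw [hadef, h, inner_zero_right] at ha
      exact lt_irrefl 0 ha
    have hvn : (0:ℝ) < ‖v‖ := norm_pos_iff.mpr hv0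
    -- curvature condition gives lower bound on η
    set g' := gradient f (k m + η m • (-v)) with hg'
    have hcurv : (1 - c2) * a ≤ L * η m * ‖v‖ ^ 2 := by
      have h1 : ⟪g' - gm, -v⟫ ≥ (1 - c2) * a := by
        have h2 : ⟪gm, -v⟫ = -a := by rw [inner_neg_right]
        have h3 := hW2
        rw [inner_sub_left]
        rw [h2] at h3 ⊢
        nlinarith [h3]
      have h4 : ⟪g' - gm, -v⟫ ≤ ‖g' - gm‖ * ‖v‖ := by
        have := real_inner_le_norm (g' - gm) (-v)
        simpa using this
      have h5 : ‖g' - gm‖ ≤ L * (η m * ‖v‖) := by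
        have h := hLip (k m + η m • (-v)) (k m)
        have heq : k m + η m • (-v) - k m = η m • (-v) := by abel
        rw [heq, norm_smul] at h
        calc ‖g' - gm‖ = ‖gradient f (k m + η m • (-v)) - gradient f (k m)‖ := rfl
          _ ≤ L * (‖η m‖ * ‖(-v : EuclideanSpace ℝ (Fin M))‖) := h
          _ = L * (η m * ‖v‖) := by
              rw [norm_neg, Real.norm_eq_abs, abs_of_pos hηpos]
      calc (1 - c2) * a ≤ ‖g' - gm‖ * ‖v‖ := le_trans h1.le h4 |>.trans (le_refl _)
        _ ≤ L * (η m * ‖v‖) * ‖v‖ := mul_le_mul_of_nonneg_right h5 (norm_nonneg _)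
        _ = L * η m * ‖v‖ ^ 2 := by ring
    have hηlb : (1 - c2) * a / (L * ‖v‖ ^ 2) ≤ η m := by
      rw [div_le_iff₀ (by positivity)]
      nlinarith [hcurv]
    -- sufficient decrease
    have hstep : k (m + 1) = k m + η m • (-v) := by
      rw [hiter m, smul_neg, sub_eq_add_neg]
    have hW1' : f (k (m + 1)) ≤ f (k m) - c1 * η m * a := by
      rw [hstep]
      have h2 : ⟪gm, -v⟫ = -a := by rw [inner_neg_right]
      calc f (k m + η m • (-v)) ≤ f (k m) + c1 * η m * ⟪gm, -v⟫ := hW1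
        _ = f (k m) - c1 * η m * a := by rw [h2]; ring
    have hquad : C * ‖gm‖ ^ 2 ≤ c1 * η m * a := by
      have h6 : c1 * ((1 - c2) * a / (L * ‖v‖ ^ 2)) * a ≤ c1 * η m * a := by
        have := mul_le_mul_of_nonneg_left hηlb (le_of_lt hc1)
        exact mul_le_mul_of_nonneg_right (by nlinarith [this]) ha.le
      refine le_trans ?_ h6
      have hdiv : μ ^ 2 * ‖gm‖ ^ 4 / (L * (K ^ 2 * ‖gm‖ ^ 2)) ≤ a ^ 2 / (L * ‖v‖ ^ 2) := by
        apply div_le_div₀ (by positivity)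
          (by nlinarith [mul_le_mul ha1 ha1 (by positivity) ha.le]) (by positivity)
        nlinarith [mul_le_mul_of_nonneg_left
          (mul_le_mul hvK hvK (norm_nonneg v) (by positivity)) hL.le]
      have heqC : C * ‖gm‖ ^ 2 = c1 * (1 - c2) *
          (μ ^ 2 * ‖gm‖ ^ 4 / (L * (K ^ 2 * ‖gm‖ ^ 2))) := by
        rw [hCdef]; field_simp
      have heq2 : c1 * ((1 - c2) * a / (L * ‖v‖ ^ 2)) * a =
          c1 * (1 - c2) * (a ^ 2 / (L * ‖v‖ ^ 2)) := by ring
      rw [heqC, heq2]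
      exact mul_le_mul_of_nonneg_left hdiv (by positivity)
    linarith [hW1', hquad]
  -- f (k m) is antitone and bounded below
  have hmono : ∀ m, f (k (m + 1)) ≤ f (k m) := by
    intro m
    have := hdec m
    nlinarith [norm_nonneg (g m), hC, sq_nonneg (‖g m‖)]
  have hFanti : Antitone fun m => f (k m) := antitone_nat_of_succ_le hmono
  have hFbdd : BddBelow (Set.range fun m => f (k m)) := by
    refine ⟨f kstar, ?_⟩
    rintro x ⟨m, rfl⟩
    exact hglobalmin (k m)
  have hFconv : Filter.Tendsto (fun m => f (k m)) Filter.atTop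
      (nhds (⨅ m, f (k m))) := tendsto_atTop_ciInf hFanti hFbdd
  have hFconv' : Filter.Tendsto (fun m => f (k (m + 1))) Filter.atTop
      (nhds (⨅ m, f (k m))) := hFconv.comp (Filter.tendsto_add_atTop_nat 1)
  have hdiff : Filter.Tendsto (fun m => f (k m) - f (k (m + 1))) Filter.atTop (nhds 0) := by
    have := hFconv.sub hFconv'
    simpa using this
  -- gradient norms tend to zero
  have hgn2 : Filter.Tendsto (fun m => ‖g m‖ ^ 2) Filter.atTop (nhds 0) := by
    have hb : ∀ m, ‖g m‖ ^ 2 ≤ (f (k m) - f (k (m + 1))) / C := by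
      intro m
      rw [le_div_iff₀ hC]
      nlinarith [hdec m]
    have hdivC : Filter.Tendsto (fun m => (f (k m) - f (k (m + 1))) / C)
        Filter.atTop (nhds 0) := by
      have := hdiff.div_const C
      simpa using this
    exact squeeze_zero (fun m => by positivity) hb hdivC
  have hgnorm : Filter.Tendsto (fun m => ‖g m‖) Filter.atTop (nhds 0) := by
    have := hgn2.sqrt
    simpa [Real.sqrt_sq (norm_nonneg _)] using this
  have hgtend : Filter.Tendsto g Filter.atTop (nhds 0) :=
    tendsto_zero_iff_norm_tendsto_zero.mpr hgnorm
  -- compact sublevel set containing the iterates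
  set S := {x : EuclideanSpace ℝ (Fin M) | f x ≤ f (k 0)} with hSdef
  have hSk : ∀ m, k m ∈ S := fun m => hFanti (Nat.zero_le m)
  have hSclosed : IsClosed S := isClosed_le hcont continuous_const
  have hSbdd : Bornology.IsBounded S := by
    have hev : {x : EuclideanSpace ℝ (Fin M) | f (k 0) + 1 ≤ f x}
        ∈ Bornology.cobounded (EuclideanSpace ℝ (Fin M)) :=
      hcoercive (Filter.eventually_ge_atTop (f (k 0) + 1))
    have hbd : Bornology.IsBounded {x : EuclideanSpace ℝ (Fin M) | f (k 0) + 1 ≤ f x}ᶜ := by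
      rw [Bornology.isBounded_def, compl_compl]; exact hev
    refine hbd.subset ?_
    intro x hx
    simp only [Set.mem_compl_iff, Set.mem_setOf_eq, not_le]
    have : f x ≤ f (k 0) := hx
    linarith
  have hScompact : IsCompact S := Metric.isCompact_of_isClosed_isBounded hSclosed hSbdd
  -- convergence via subsequences
  apply Filter.tendsto_of_subseq_tendsto
  intro ns hns
  obtain ⟨x, hxS, φ, hφmono, hφtend⟩ := hScompact.tendsto_subseq (fun n => hSk (ns n))
  have hgx : gradient f x = 0 := by
    have h1 : Filter.Tendsto (fun n => g (ns (φ n))) Filter.atTop (nhds 0) :=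
      hgtend.comp (hns.comp hφmono.tendsto_atTop)
    have h2 : Filter.Tendsto (fun n => gradient f (k (ns (φ n)))) Filter.atTop
        (nhds (gradient f x)) := (hgradcont.tendsto x).comp hφtend
    exact tendsto_nhds_unique h2 h1
  refine ⟨φ, ?_⟩
  rw [(hcrit x).mp hgx] at hφtend
  exact hφtend
end
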